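/- arXiv:1904.07350 — 6 statements merged into one kernel-verified Lean document; each statement's English description precedes it below -/
import Mathlib

section
/- For every natural numbers k, l, n ≥ 1 there exist a group G and free subgroups A, B, F of G such that rank(A) = k, rank(B) = l, the index of F in G equals n, and rank(A ∩ B) − 1 = n·(k−1)·(l−1), so the bound rank(A∩B)−1 ≤ |G:F|·(rank(A)−1)·(rank(B)−1) is sharp. -/
open SemidirectProduct

namespace HNSharp

lemma fg_hom_ext_apply {α : Type*} {G : Type*} [Group G] {f g : FreeGroup α →* G}
    (h : ∀ a, f (FreeGroup.of a) = g (FreeGroup.of a)) (x : FreeGroup α) : f x = g x :=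
  DFunLike.congr_fun (FreeGroup.ext_hom f g h) x

/-- shift automorphism of the free group on `ℤ × T` translating the first coordinate. -/
def shiftA (T : Type) (z : ℤ) : FreeGroup (ℤ × T) ≃* FreeGroup (ℤ × T) :=
  FreeGroup.freeGroupCongr (Equiv.prodCongr (Equiv.addRight z) (Equiv.refl T))

lemma shiftA_of (T : Type) (z : ℤ) (q : ℤ) (t : T) :
    shiftA T z (FreeGroup.of (q, t)) = FreeGroup.of (q + z, t) := by
  simp [shiftA]

/-- the shift action of `ℤ` on the free group on `ℤ × T`. -/
def shift (T : Type) : Multiplicative ℤ →* MulAut (FreeGroup (ℤ × T)) where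
  toFun z := shiftA T z.toAdd
  map_one' := by
    ext1 x
    induction x using FreeGroup.induction_on with
    | C1 => simp
    | of q =>
        obtain ⟨q, t⟩ := q
        simp [shiftA_of]
    | inv_of q ih => simp_all
    | mul a b iha ihb => simp_all
  map_mul' a b := by
    ext1 x
    induction x using FreeGroup.induction_on with
    | C1 => simp
    | of q =>
        obtain ⟨q, t⟩ := q
        simp only [MulAut.mul_apply]
        rw [shiftA_of, shiftA_of, shiftA_of]
        have h : q + Multiplicative.toAdd (a * b)
            = q + Multiplicative.toAdd b + Multiplicative.toAdd a := by
          rw [toAdd_mul]; ring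
        rw [h]
    | inv_of q ih =>
        simp only [map_inv, MulAut.mul_apply] at *
        rw [ih]
    | mul c d ihc ihd =>
        simp only [map_mul, MulAut.mul_apply] at *
        rw [ihc, ihd]

lemma shift_of (T : Type) (z : Multiplicative ℤ) (q : ℤ) (t : T) :
    shift T z (FreeGroup.of (q, t)) = FreeGroup.of (q + z.toAdd, t) :=
  shiftA_of T z.toAdd q t

/-- The mapping torus group of the shift. -/
abbrev Tor (T : Type) := FreeGroup (ℤ × T) ⋊[shift T] Multiplicative ℤ

end HNSharp

namespace HNSharp

open SemidirectProduct

variable (T : Type)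

/-- forward: free group on `Option T` to the mapping torus. -/
def fwd : FreeGroup (Option T) →* Tor T :=
  FreeGroup.lift (fun o => Option.elim o (inr (Multiplicative.ofAdd 1))
    (fun t => inl (FreeGroup.of (0, t))))

/-- free part of the backwards map. -/
def backN : FreeGroup (ℤ × T) →* FreeGroup (Option T) :=
  FreeGroup.lift (fun p => (FreeGroup.of none) ^ p.1 * FreeGroup.of (some p.2)
      * (FreeGroup.of none) ^ (-p.1))

lemma backN_of (q : ℤ) (t : T) :
    backN T (FreeGroup.of (q, t))
      = (FreeGroup.of none) ^ q * FreeGroup.of (some t) * (FreeGroup.of none) ^ (-q) := by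
  simp [backN]

/-- `ℤ`-part of the backwards map. -/
def backZ : Multiplicative ℤ →* FreeGroup (Option T) :=
  MonoidHom.mk' (fun z => (FreeGroup.of none) ^ z.toAdd) (by
    intro a b
    rw [toAdd_mul, zpow_add])

lemma backZ_apply (z : Multiplicative ℤ) : backZ T z = (FreeGroup.of none) ^ z.toAdd := rfl

lemma back_compat : ∀ g : Multiplicative ℤ,
    (backN T).comp ((shift T) g).toMonoidHom
      = (MulAut.conj ((backZ T) g)).toMonoidHom.comp (backN T) := by
  intro g
  apply FreeGroup.ext_hom
  rintro ⟨q, t⟩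
  simp only [MonoidHom.comp_apply, MulEquiv.coe_toMonoidHom]
  rw [shift_of, backN_of, backN_of, backZ_apply]
  simp only [MulAut.conj_apply]
  rw [zpow_add]
  group

/-- backwards: mapping torus to free group on `Option T`. -/
def bwd : Tor T →* FreeGroup (Option T) :=
  SemidirectProduct.lift (backN T) (backZ T) (back_compat T)

lemma bwd_inl (w : FreeGroup (ℤ × T)) : bwd T (inl w) = backN T w :=
  SemidirectProduct.lift_inl _ _ _ _

lemma bwd_inr (z : Multiplicative ℤ) : bwd T (inr z) = backZ T z :=
  SemidirectProduct.lift_inr _ _ _ _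

lemma fwd_none : fwd T (FreeGroup.of none) = inr (Multiplicative.ofAdd 1) := by
  simp [fwd, Option.elim]

lemma fwd_some (t : T) : fwd T (FreeGroup.of (some t)) = inl (FreeGroup.of (0, t)) := by
  simp [fwd, Option.elim]

lemma ofAdd_one_zpow (q : ℤ) : (Multiplicative.ofAdd (1:ℤ)) ^ q = Multiplicative.ofAdd q := by
  apply Multiplicative.toAdd.injective
  rw [toAdd_zpow]
  simp

lemma inr_conj (q : ℤ) (w : FreeGroup (ℤ × T)) :
    (inr (Multiplicative.ofAdd (1:ℤ)) : Tor T) ^ q * inl w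
        * (inr (Multiplicative.ofAdd (1:ℤ)) : Tor T) ^ (-q)
      = inl (shift T (Multiplicative.ofAdd q) w) := by
  have h : ∀ r : ℤ, (inr (Multiplicative.ofAdd (1:ℤ)) : Tor T) ^ r
      = inr (Multiplicative.ofAdd r) := by
    intro r
    rw [← map_zpow, ofAdd_one_zpow]
  rw [h, h, show Multiplicative.ofAdd (-q) = (Multiplicative.ofAdd q)⁻¹ from rfl,
    ← SemidirectProduct.inl_aut]

lemma bwd_fwd : (bwd T).comp (fwd T) = MonoidHom.id _ := by
  apply FreeGroup.ext_hom
  intro o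
  cases o with
  | none =>
      simp only [MonoidHom.comp_apply, MonoidHom.id_apply]
      rw [fwd_none, bwd_inr, backZ_apply]
      simp
  | some t =>
      simp only [MonoidHom.comp_apply, MonoidHom.id_apply]
      rw [fwd_some, bwd_inl, backN_of]
      simp

lemma fwd_bwd : (fwd T).comp (bwd T) = MonoidHom.id _ := by
  apply SemidirectProduct.hom_ext
  · apply FreeGroup.ext_hom
    rintro ⟨q, t⟩
    simp only [MonoidHom.comp_apply, MonoidHom.id_apply]
    rw [bwd_inl, backN_of]
    simp only [map_mul, map_zpow]
    rw [fwd_none, fwd_some, inr_conj, shift_of]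
    norm_num
  · apply MonoidHom.ext_mint
    simp only [MonoidHom.comp_apply, MonoidHom.id_apply]
    rw [bwd_inr, backZ_apply]
    simp only [toAdd_ofAdd, zpow_one]
    rw [fwd_none]

/-- The mapping torus of the shift on `FreeGroup (ℤ × T)` is free on `Option T`. -/
def torEquivFree : Tor T ≃* FreeGroup (Option T) :=
  MonoidHom.toMulEquiv (bwd T) (fwd T) (fwd_bwd T) (bwd_fwd T)

end HNSharp

namespace HNSharp

open SemidirectProduct

variable {T : Type}

/-- the affine embedding of index sets. -/
def embF (d : ℤ) (v : T → ℤ) : ℤ × T → ℤ := fun p => p.1 * d + v p.2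

/-- induced map on free groups. -/
def embMap (d : ℤ) (v : T → ℤ) : FreeGroup (ℤ × T) →* FreeGroup (ℤ × Unit) :=
  FreeGroup.lift (fun p => FreeGroup.of (embF d v p, ()))

lemma embMap_of (d : ℤ) (v : T → ℤ) (p : ℤ × T) :
    embMap d v (FreeGroup.of p) = FreeGroup.of (embF d v p, ()) := by
  simp [embMap]

/-- multiplication by `d` on `Multiplicative ℤ`. -/
def zmul (d : ℤ) : Multiplicative ℤ →* Multiplicative ℤ :=
  MonoidHom.mk' (fun z => Multiplicative.ofAdd (z.toAdd * d)) (by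
    intro a b
    rw [toAdd_mul, add_mul, ofAdd_add])

lemma toAdd_zmul (d : ℤ) (z : Multiplicative ℤ) : (zmul d z).toAdd = z.toAdd * d := rfl

lemma psi_compat (d : ℤ) (v : T → ℤ) : ∀ g : Multiplicative ℤ,
    ((inl : FreeGroup (ℤ × Unit) →* Tor Unit).comp (embMap d v)).comp
        ((shift T) g).toMonoidHom
      = (MulAut.conj ((inr.comp (zmul d)) g)).toMonoidHom.comp
          ((inl : FreeGroup (ℤ × Unit) →* Tor Unit).comp (embMap d v)) := by
  intro g
  apply FreeGroup.ext_hom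
  rintro ⟨q, t⟩
  simp only [MonoidHom.comp_apply, MulEquiv.coe_toMonoidHom, MulAut.conj_apply]
  rw [shift_of, embMap_of, embMap_of]
  rw [show (inr ((zmul d) g) : Tor Unit) * inl (FreeGroup.of (embF d v (q, t), ()))
      * (inr ((zmul d) g) : Tor Unit)⁻¹
    = inr ((zmul d) g) * inl (FreeGroup.of (embF d v (q, t), ())) * inr (((zmul d) g)⁻¹) from by
      rw [map_inv]]
  rw [← SemidirectProduct.inl_aut, shift_of]
  congr 2
  simp only [embF]
  rw [toAdd_zmul]
  ring

/-- The subgroup embedding gadget. -/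
def psi (d : ℤ) (v : T → ℤ) : Tor T →* Tor Unit :=
  SemidirectProduct.lift (inl.comp (embMap d v)) (inr.comp (zmul d)) (psi_compat d v)

lemma psi_elem (d : ℤ) (v : T → ℤ) (w : FreeGroup (ℤ × T)) (z : Multiplicative ℤ) :
    psi d v ⟨w, z⟩ = ⟨embMap d v w, zmul d z⟩ := by
  rw [show (⟨w, z⟩ : Tor T) = inl w * inr z from (inl_left_mul_inr_right ⟨w, z⟩).symm]
  rw [map_mul]
  rw [show psi d v (inl w) = inl (embMap d v w) from SemidirectProduct.lift_inl _ _ _ _]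
  rw [show psi d v (inr z) = inr (zmul d z) from SemidirectProduct.lift_inr _ _ _ _]
  exact inl_left_mul_inr_right ⟨embMap d v w, zmul d z⟩

lemma embMap_injective {d : ℤ} {v : T → ℤ} (hv : Function.Injective (embF d v)) :
    Function.Injective (embMap d v) := by
  classical
  let r : FreeGroup (ℤ × Unit) →* FreeGroup (ℤ × T) :=
    FreeGroup.lift (fun x => if h : ∃ p, embF d v p = x.1 then FreeGroup.of h.choose else 1)
  have hcomp : r.comp (embMap d v) = MonoidHom.id _ := by
    apply FreeGroup.ext_hom
    intro p
    simp only [MonoidHom.comp_apply, MonoidHom.id_apply]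
    rw [embMap_of]
    have hex : ∃ p', embF d v p' = embF d v p := ⟨p, rfl⟩
    simp only [r, FreeGroup.lift_apply_of, dif_pos hex]
    congr 1
    exact hv hex.choose_spec
  intro a b h
  have := fg_hom_ext_apply (f := r.comp (embMap d v)) (g := MonoidHom.id _)
    (fun x => by rw [hcomp]) 
  calc a = r (embMap d v a) := (this a).symm
  _ = r (embMap d v b) := by rw [h]
  _ = b := this b

lemma zmul_injective {d : ℤ} (hd : d ≠ 0) : Function.Injective (zmul d) := by
  intro a b h
  have : a.toAdd * d = b.toAdd * d := by
    rw [← toAdd_zmul, ← toAdd_zmul, h]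
  exact Multiplicative.toAdd.injective (mul_right_cancel₀ hd this)

lemma psi_injective {d : ℤ} {v : T → ℤ} (hd : d ≠ 0) (hv : Function.Injective (embF d v)) :
    Function.Injective (psi d v) := by
  intro a b h
  obtain ⟨wa, za⟩ := a
  obtain ⟨wb, zb⟩ := b
  rw [psi_elem, psi_elem] at h
  have h1 : embMap d v wa = embMap d v wb := congrArg SemidirectProduct.left h
  have h2 : zmul d za = zmul d zb := congrArg SemidirectProduct.right h
  have e1 := embMap_injective hv h1
  have e2 := zmul_injective hd h2
  rw [e1, e2]

/-- the subgroup of the free group on `ℤ × Unit` generated by the letters from `S`. -/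
def Wgt (S : Set ℤ) : Subgroup (FreeGroup (ℤ × Unit)) :=
  Subgroup.closure (FreeGroup.of '' {x : ℤ × Unit | x.1 ∈ S})

lemma embMap_range (d : ℤ) (v : T → ℤ) :
    (embMap d v).range = Wgt (Set.range (embF d v)) := by
  rw [embMap, FreeGroup.range_lift_eq_closure, Wgt]
  congr 1
  ext y
  constructor
  · rintro ⟨p, rfl⟩
    exact ⟨(embF d v p, ()), ⟨p, rfl⟩, rfl⟩
  · rintro ⟨x, hx, rfl⟩
    obtain ⟨p, hp⟩ := hx
    refine ⟨p, ?_⟩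
    dsimp only
    rw [hp]

lemma psi_mem_range (d : ℤ) (v : T → ℤ) (x : Tor Unit) :
    x ∈ (psi d v).range ↔ x.left ∈ Wgt (Set.range (embF d v)) ∧ d ∣ x.right.toAdd := by
  constructor
  · rintro ⟨y, rfl⟩
    obtain ⟨w, z⟩ := y
    rw [psi_elem]
    constructor
    · rw [← embMap_range]
      exact ⟨w, rfl⟩
    · rw [show (SemidirectProduct.mk (embMap d v w) (zmul d z) : Tor Unit).right
        = zmul d z from rfl, toAdd_zmul]
      exact dvd_mul_left d z.toAdd
  · rintro ⟨hw, e, he⟩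
    rw [← embMap_range] at hw
    obtain ⟨w', hw'⟩ := hw
    refine ⟨⟨w', Multiplicative.ofAdd e⟩, ?_⟩
    rw [psi_elem, hw']
    have : zmul d (Multiplicative.ofAdd e) = x.right := by
      apply Multiplicative.toAdd.injective
      rw [toAdd_zmul, he]
      simp [mul_comm]
    rw [this]

lemma Wgt_mono {S₁ S₂ : Set ℤ} (h : S₁ ⊆ S₂) : Wgt S₁ ≤ Wgt S₂ :=
  Subgroup.closure_mono (Set.image_mono (fun x hx => h hx))

lemma Wgt_inf (S₁ S₂ : Set ℤ) : Wgt S₁ ⊓ Wgt S₂ = Wgt (S₁ ∩ S₂) := by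
  classical
  apply le_antisymm
  · let r : FreeGroup (ℤ × Unit) →* FreeGroup (ℤ × Unit) :=
      FreeGroup.lift (fun x => if x.1 ∈ S₁ then FreeGroup.of x else 1)
    intro w hw
    obtain ⟨h1, h2⟩ := hw
    have e1 : r w = w := by
      refine Subgroup.closure_induction ?_ ?_ ?_ ?_ h1
      · rintro x ⟨y, hy, rfl⟩
        simp only [Set.mem_setOf_eq] at hy
        simp only [r, FreeGroup.lift_apply_of]
        rw [if_pos hy]
      · exact map_one r
      · intro a b _ _ ha hb
        rw [map_mul, ha, hb]
      · intro a _ ha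
        rw [map_inv, ha]
    have e2 : r w ∈ Wgt (S₁ ∩ S₂) := by
      refine Subgroup.closure_induction ?_ ?_ ?_ ?_ h2
      · rintro x ⟨y, hy, rfl⟩
        simp only [Set.mem_setOf_eq] at hy
        simp only [r, FreeGroup.lift_apply_of]
        by_cases hy1 : y.1 ∈ S₁
        · rw [if_pos hy1]
          exact Subgroup.subset_closure ⟨y, ⟨hy1, hy⟩, rfl⟩
        · rw [if_neg hy1]
          exact Subgroup.one_mem _
      · rw [map_one]; exact Subgroup.one_mem _
      · intro a b _ _ ha hb
        rw [map_mul]; exact Subgroup.mul_mem _ ha hb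
      · intro a _ ha
        rw [map_inv]; exact Subgroup.inv_mem _ ha
    rw [← e1]
    exact e2
  · exact le_inf (Wgt_mono Set.inter_subset_left) (Wgt_mono Set.inter_subset_right)

end HNSharp

namespace HNSharp

lemma div_unique {d q q' x x' : ℤ} (hd : 0 < d) (h0 : 0 ≤ x) (h1 : x < d)
    (h0' : 0 ≤ x') (h1' : x' < d) (h : q * d + x = q' * d + x') : q = q' ∧ x = x' := by
  have hlt : (q - q') * d < 1 * d := by nlinarith
  have hgt : (-1) * d < (q - q') * d := by nlinarith
  have e1 : q - q' < 1 := lt_of_mul_lt_mul_right hlt hd.le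
  have e2 : -1 < q - q' := lt_of_mul_lt_mul_right hgt hd.le
  have hq : q = q' := by omega
  refine ⟨hq, by rw [hq] at h; linarith⟩

section Concrete

variable (K L n : ℕ)

def l' : ℤ := (L : ℤ) + 1
def d1 : ℤ := (n : ℤ) * l' L * K + 1
def DD : ℤ := d1 K L n * ((n : ℤ) * l' L)

def v1 : Fin K → ℤ := fun a => (a : ℤ)
def v2 : Fin L → ℤ := fun b => (b : ℤ)
def v3 : Fin n × Fin K × Fin L → ℤ :=
  fun x => (x.2.1 : ℤ) * (1 - d1 K L n) + ((x.2.2 : ℤ) + l' L * (x.1 : ℤ)) * d1 K L n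

lemma l'_pos : 0 < l' L := by unfold l'; positivity

variable {n}

lemma d1_pos (hn : 0 < n) : 0 < d1 K L n := by
  unfold d1
  have : (0:ℤ) ≤ (n : ℤ) * l' L * K := by
    have := l'_pos L
    positivity
  linarith

lemma DD_pos (hn : 0 < n) : 0 < DD K L n := by
  unfold DD
  have h1 := d1_pos K L hn
  have h2 := l'_pos L
  have h3 : (0:ℤ) < (n:ℤ) := by exact_mod_cast hn
  positivity

variable {K L}

lemma fin_lt_d1 (hn : 0 < n) (a : Fin K) : (a : ℤ) < d1 K L n := by
  have h1 : (a : ℤ) < (K : ℤ) := by exact_mod_cast a.isLt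
  have h2 : (1:ℤ) ≤ (n : ℤ) := by exact_mod_cast hn
  have h3 : (1:ℤ) ≤ l' L := by unfold l'; omega
  have h4 : (0:ℤ) ≤ (K:ℤ) := by exact_mod_cast Nat.zero_le K
  have h6 : (1:ℤ) * 1 ≤ (n:ℤ) * l' L := mul_le_mul h2 h3 (by norm_num) (by linarith)
  have h5 : (0:ℤ) ≤ ((n:ℤ) * l' L - 1) * K := mul_nonneg (by linarith) h4
  unfold d1
  nlinarith

lemma inj1 (hn : 0 < n) : Function.Injective (embF (d1 K L n) (v1 K)) := by
  rintro ⟨q, a⟩ ⟨q', a'⟩ h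
  unfold embF v1 at h
  obtain ⟨hq, ha⟩ := div_unique (d1_pos K L hn) (by exact_mod_cast Nat.zero_le _)
    (fin_lt_d1 hn a) (by exact_mod_cast Nat.zero_le _) (fin_lt_d1 hn a') h
  have hv : (a : ℕ) = a' := by exact_mod_cast ha
  obtain rfl : q = q' := hq
  obtain rfl : a = a' := Fin.ext hv
  rfl

lemma fin_lt_l' (b : Fin L) : (b : ℤ) < l' L := by
  have : (b : ℤ) < (L : ℤ) := by exact_mod_cast b.isLt
  unfold l'; linarith

lemma inj2 : Function.Injective (embF (l' L) (v2 L)) := by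
  rintro ⟨q, b⟩ ⟨q', b'⟩ h
  unfold embF v2 at h
  obtain ⟨hq, hb⟩ := div_unique (l'_pos L) (by exact_mod_cast Nat.zero_le _)
    (fin_lt_l' b) (by exact_mod_cast Nat.zero_le _) (fin_lt_l' b') h
  have hv : (b : ℕ) = b' := by exact_mod_cast hb
  obtain rfl : q = q' := hq
  obtain rfl : b = b' := Fin.ext hv
  rfl

lemma fin_lt_n (hn : 0 < n) (i : Fin n) : (i : ℤ) < (n : ℤ) := by exact_mod_cast i.isLt

lemma inj3 (hn : 0 < n) : Function.Injective (embF (DD K L n) (v3 K L n)) := by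
  rintro ⟨q, i, a, b⟩ ⟨q', i', a', b'⟩ h
  unfold embF v3 at h
  have h1 : (q * ((n:ℤ) * l' L) + b + l' L * i - a) * d1 K L n + a
      = (q' * ((n:ℤ) * l' L) + b' + l' L * i' - a') * d1 K L n + a' := by
    unfold DD at h
    linear_combination h
  obtain ⟨hM, ha⟩ := div_unique (d1_pos K L hn) (by exact_mod_cast Nat.zero_le _)
    (fin_lt_d1 hn a) (by exact_mod_cast Nat.zero_le _) (fin_lt_d1 hn a') h1
  have h2 : (q * (n:ℤ) + i) * l' L + b = (q' * (n:ℤ) + i') * l' L + b' := by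
    linear_combination hM + ha
  obtain ⟨hQ, hb⟩ := div_unique (l'_pos L) (by exact_mod_cast Nat.zero_le _)
    (fin_lt_l' b) (by exact_mod_cast Nat.zero_le _) (fin_lt_l' b') h2
  obtain ⟨hq, hi⟩ := div_unique (show (0:ℤ) < (n:ℤ) by exact_mod_cast hn)
    (by exact_mod_cast Nat.zero_le _) (fin_lt_n hn i)
    (by exact_mod_cast Nat.zero_le _) (fin_lt_n hn i') hQ
  have ea : (a : ℕ) = a' := by exact_mod_cast ha
  have eb : (b : ℕ) = b' := by exact_mod_cast hb
  have ei : (i : ℕ) = i' := by exact_mod_cast hi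
  obtain rfl : q = q' := hq
  obtain rfl : a = a' := Fin.ext ea
  obtain rfl : b = b' := Fin.ext eb
  obtain rfl : i = i' := Fin.ext ei
  rfl

lemma rangeEq (hn : 0 < n) :
    Set.range (embF (d1 K L n) (v1 K)) ∩ Set.range (embF (l' L) (v2 L))
      = Set.range (embF (DD K L n) (v3 K L n)) := by
  ext x
  constructor
  · rintro ⟨⟨⟨q₁, a⟩, ha⟩, ⟨⟨q₂, b⟩, hb⟩⟩
    unfold embF v1 at ha
    unfold embF v2 at hb
    have key : q₁ + (a:ℤ) - (b:ℤ) = l' L * (q₂ - q₁ * ((n:ℤ) * K)) := by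
      unfold d1 at ha
      linear_combination ha - hb
    set s : ℤ := q₂ - q₁ * ((n:ℤ) * K) with hs
    have hn' : (n:ℤ) ≠ 0 := by exact_mod_cast hn.ne'
    have hnpos : (0:ℤ) < (n:ℤ) := by exact_mod_cast hn
    have hi0 : 0 ≤ s % (n:ℤ) := Int.emod_nonneg s hn'
    have hi1 : s % (n:ℤ) < (n:ℤ) := Int.emod_lt_of_pos s hnpos
    have hdm : (n:ℤ) * (s / (n:ℤ)) + s % (n:ℤ) = s := Int.mul_ediv_add_emod s (n:ℤ)
    have hlt : (s % (n:ℤ)).toNat < n := by omega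
    refine ⟨⟨s / (n:ℤ), ⟨(s % (n:ℤ)).toNat, hlt⟩, a, b⟩, ?_⟩
    unfold embF v3
    have hcast : ((⟨(s % (n:ℤ)).toNat, hlt⟩ : Fin n) : ℤ) = s % (n:ℤ) := by
      simp [Int.toNat_of_nonneg hi0]
    rw [hcast, ← ha]
    unfold DD
    linear_combination (l' L * d1 K L n) * hdm - d1 K L n * key
  · rintro ⟨⟨q, i, a, b⟩, rfl⟩
    constructor
    · refine ⟨(q * ((n:ℤ) * l' L) + b + l' L * i - a, a), ?_⟩
      unfold embF v1 v3 DD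
      ring
    · refine ⟨(q * (n:ℤ) * d1 K L n - (a:ℤ) * n * K + (b:ℤ) * n * K + (i:ℤ) * d1 K L n, b), ?_⟩
      unfold embF v2 v3 DD d1
      ring

lemma dvd5 (hn : 0 < n) (s : ℤ) :
    (d1 K L n ∣ s ∧ ((n:ℤ) * l' L) ∣ s) ↔ DD K L n ∣ s := by
  constructor
  · rintro ⟨⟨u, hu⟩, ⟨w, hw⟩⟩
    have hrw : s = s * d1 K L n - (s * ((n:ℤ) * l' L)) * K := by
      unfold d1; ring
    rw [hrw]
    apply dvd_sub
    · exact ⟨w, by rw [hw]; unfold DD; ring⟩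
    · exact ⟨u * K, by rw [hu]; unfold DD; ring⟩
  · intro ⟨w, hw⟩
    exact ⟨⟨((n:ℤ) * l' L) * w, by rw [hw]; unfold DD; ring⟩,
      ⟨d1 K L n * w, by rw [hw]; unfold DD; ring⟩⟩

end Concrete

end HNSharp

namespace HNSharp

open SemidirectProduct

/-- a free group basis on the range of an injective hom from a mapping torus. -/
noncomputable def basisOfInj {T : Type} {G : Type} [Group G] (Φ : Tor T →* G)
    (h : Function.Injective Φ) : FreeGroupBasis (Option T) Φ.range :=
  ((FreeGroupBasis.ofFreeGroup (Option T)).map (torEquivFree T).symm).map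
    (MonoidHom.ofInjective h)

section Assemble

abbrev Cgrp (n : ℕ) := Multiplicative (ZMod n)
abbrev Amb (n : ℕ) := Tor Unit × Cgrp n

/-- the `ZMod n`-character of the `Tor (Fin L)` mapping torus. -/
def chi (L n : ℕ) : Tor (Fin L) →* Cgrp n :=
  MonoidHom.mk' (fun y => Multiplicative.ofAdd ((y.right.toAdd : ℤ) : ZMod n)) (by
    intro a b
    rw [SemidirectProduct.mul_right, toAdd_mul]
    push_cast
    rw [ofAdd_add])

lemma chi_apply (L n : ℕ) (y : Tor (Fin L)) :
    chi L n y = Multiplicative.ofAdd ((y.right.toAdd : ℤ) : ZMod n) := rfl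

def Psi1 (K L n : ℕ) : Tor (Fin K) →* Amb n :=
  (MonoidHom.inl _ _).comp (psi (d1 K L n) (v1 K))
def Psi2 (K L n : ℕ) : Tor (Fin L) →* Amb n :=
  (psi (l' L) (v2 L)).prod (chi L n)
def Psi3 (K L n : ℕ) : Tor (Fin n × Fin K × Fin L) →* Amb n :=
  (MonoidHom.inl _ _).comp (psi (DD K L n) (v3 K L n))
def Finl (n : ℕ) : Tor Unit →* Amb n := MonoidHom.inl _ _

lemma memA (K L n : ℕ) (x : Amb n) :
    x ∈ (Psi1 K L n).range
      ↔ (x.1.left ∈ Wgt (Set.range (embF (d1 K L n) (v1 K)))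
          ∧ d1 K L n ∣ x.1.right.toAdd) ∧ x.2 = 1 := by
  rw [show (x.1.left ∈ Wgt (Set.range (embF (d1 K L n) (v1 K)))
          ∧ d1 K L n ∣ x.1.right.toAdd) = (x.1 ∈ (psi (d1 K L n) (v1 K)).range) from
    by rw [psi_mem_range]]
  constructor
  · rintro ⟨y, rfl⟩
    exact ⟨⟨y, rfl⟩, rfl⟩
  · rintro ⟨⟨y, hy⟩, hc⟩
    refine ⟨y, ?_⟩
    have : x = (x.1, x.2) := rfl
    rw [this, ← hy, hc]
    rfl

lemma memB (K L n : ℕ) (x : Amb n) :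
    x ∈ (Psi2 K L n).range
      ↔ x.1.left ∈ Wgt (Set.range (embF (l' L) (v2 L)))
          ∧ ∃ e : ℤ, x.1.right.toAdd = l' L * e
            ∧ x.2 = Multiplicative.ofAdd ((e : ZMod n)) := by
  constructor
  · rintro ⟨y, rfl⟩
    obtain ⟨w, z⟩ := y
    have h1 : (Psi2 K L n) ⟨w, z⟩ = (psi (l' L) (v2 L) ⟨w, z⟩, chi L n ⟨w, z⟩) := rfl
    rw [h1, psi_elem]
    refine ⟨?_, z.toAdd, ?_, ?_⟩
    · rw [← embMap_range]; exact ⟨w, rfl⟩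
    · rw [show (SemidirectProduct.mk (embMap (l' L) (v2 L) w) (zmul (l' L) z)
        : Tor Unit).right = zmul (l' L) z from rfl, toAdd_zmul]
      ring
    · rw [chi_apply]
  · rintro ⟨hw, e, he, hc⟩
    rw [← embMap_range] at hw
    obtain ⟨w', hw'⟩ := hw
    refine ⟨⟨w', Multiplicative.ofAdd e⟩, ?_⟩
    have h1 : (Psi2 K L n) ⟨w', Multiplicative.ofAdd e⟩
        = (psi (l' L) (v2 L) ⟨w', Multiplicative.ofAdd e⟩,
            chi L n ⟨w', Multiplicative.ofAdd e⟩) := rfl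
    rw [h1, psi_elem, hw', chi_apply]
    have hx1 : (SemidirectProduct.mk x.1.left x.1.right : Tor Unit) = x.1 := rfl
    have h2 : zmul (l' L) (Multiplicative.ofAdd e) = x.1.right := by
      apply Multiplicative.toAdd.injective
      rw [toAdd_zmul, he]
      simp [mul_comm]
    rw [h2, hx1]
    have h3 : Multiplicative.ofAdd
        (((Multiplicative.toAdd (Multiplicative.ofAdd e) : ℤ) : ZMod n)) = x.2 := by
      rw [hc]; simp
    rw [h3]

lemma mem3 (K L n : ℕ) (x : Amb n) :
    x ∈ (Psi3 K L n).range
      ↔ (x.1.left ∈ Wgt (Set.range (embF (DD K L n) (v3 K L n)))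
          ∧ DD K L n ∣ x.1.right.toAdd) ∧ x.2 = 1 := by
  rw [show (x.1.left ∈ Wgt (Set.range (embF (DD K L n) (v3 K L n)))
          ∧ DD K L n ∣ x.1.right.toAdd) = (x.1 ∈ (psi (DD K L n) (v3 K L n)).range) from
    by rw [psi_mem_range]]
  constructor
  · rintro ⟨y, rfl⟩
    exact ⟨⟨y, rfl⟩, rfl⟩
  · rintro ⟨⟨y, hy⟩, hc⟩
    refine ⟨y, ?_⟩
    have : x = (x.1, x.2) := rfl
    rw [this, ← hy, hc]
    rfl

lemma ABeq {K L n : ℕ} (hn : 0 < n) [NeZero n] :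
    (Psi1 K L n).range ⊓ (Psi2 K L n).range = (Psi3 K L n).range := by
  ext x
  rw [Subgroup.mem_inf, memA, memB, mem3]
  have hl'0 : l' L ≠ 0 := (l'_pos L).ne'
  constructor
  · rintro ⟨⟨⟨hw1, hd1⟩, hc1⟩, hw2, e, he, hc2⟩
    have hze : ((e : ZMod n) : ZMod n) = 0 := by
      have := hc2.symm.trans hc1
      have h0 : ((e : ZMod n)) = 0 := by
        have := congrArg Multiplicative.toAdd this
        simpa using this
      exact h0
    have hne : (n:ℤ) ∣ e := by
      rwa [ZMod.intCast_zmod_eq_zero_iff_dvd] at hze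
    obtain ⟨f, rfl⟩ := hne
    have hnl : ((n:ℤ) * l' L) ∣ x.1.right.toAdd := ⟨f, by rw [he]; ring⟩
    have hD : DD K L n ∣ x.1.right.toAdd := (dvd5 hn _).1 ⟨hd1, hnl⟩
    refine ⟨⟨?_, hD⟩, hc1⟩
    have : x.1.left ∈ Wgt (Set.range (embF (d1 K L n) (v1 K)))
        ⊓ Wgt (Set.range (embF (l' L) (v2 L))) := ⟨hw1, hw2⟩
    rwa [Wgt_inf, rangeEq hn] at this
  · rintro ⟨⟨hw3, hD⟩, hc⟩
    have hw12 : x.1.left ∈ Wgt (Set.range (embF (d1 K L n) (v1 K)))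
        ⊓ Wgt (Set.range (embF (l' L) (v2 L))) := by
      rw [Wgt_inf, rangeEq hn]; exact hw3
    obtain ⟨hd1, hnl⟩ := (dvd5 hn _).2 hD
    obtain ⟨g, hg⟩ := hnl
    refine ⟨⟨⟨hw12.1, hd1⟩, hc⟩, hw12.2, (n:ℤ) * g, by rw [hg]; ring, ?_⟩
    rw [hc]
    have : (((n:ℤ) * g : ℤ) : ZMod n) = 0 := by
      rw [ZMod.intCast_zmod_eq_zero_iff_dvd]
      exact ⟨g, rfl⟩
    rw [this]
    rfl

end Assemble

end HNSharp

namespace HNSharp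

lemma inl_injective' {G₁ G₂ : Type} [Group G₁] [Group G₂] :
    Function.Injective (MonoidHom.inl G₁ G₂) :=
  fun a b h => congrArg Prod.fst h

lemma injPsi1 {K L n : ℕ} (hn : 0 < n) : Function.Injective (Psi1 K L n) :=
  inl_injective'.comp (psi_injective (d1_pos K L hn).ne' (inj1 hn))

lemma injPsi2 {K L n : ℕ} (hn : 0 < n) : Function.Injective (Psi2 K L n) := by
  intro a b h
  exact psi_injective (l'_pos L).ne' inj2 (congrArg Prod.fst h)

lemma injPsi3 {K L n : ℕ} (hn : 0 < n) : Function.Injective (Psi3 K L n) :=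
  inl_injective'.comp (psi_injective (DD_pos K L hn).ne' (inj3 hn))

lemma F_eq_ker (n : ℕ) :
    (Finl n).range = (MonoidHom.snd (Tor Unit) (Cgrp n)).ker := by
  ext x
  rw [MonoidHom.mem_ker]
  constructor
  · rintro ⟨y, rfl⟩
    rfl
  · intro hx
    refine ⟨x.1, ?_⟩
    have hx2 : x.2 = 1 := hx
    have hh : x = (x.1, x.2) := rfl
    rw [hh, hx2]
    rfl

lemma F_index (n : ℕ) (hn : 0 < n) : (Finl n).range.index = n := by
  rw [F_eq_ker, Subgroup.index_ker]
  have hsurj : (MonoidHom.snd (Tor Unit) (Cgrp n)).range = ⊤ :=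
    MonoidHom.range_eq_top_of_surjective _ (fun c => ⟨(1, c), rfl⟩)
  rw [hsurj]
  rw [Nat.card_congr Subgroup.topEquiv.toEquiv]
  rw [Nat.card_congr (Multiplicative.toAdd (α := ZMod n))]
  exact Nat.card_zmod n

end HNSharp

/-- **Sharpness of Theorem 1**: for all `k, l, n ≥ 1` there is a group `G` with free
subgroups `A`, `B`, `F` such that `rank A = k`, `rank B = l`, `|G : F| = n`, and
`rank (A ⊓ B) - 1 = n * (k - 1) * (l - 1)`, i.e. `rank (A ⊓ B) = n*(k-1)*(l-1) + 1`. -/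
theorem hanna_neumann_bound_sharp (k l n : ℕ) (hk : 1 ≤ k) (hl : 1 ≤ l) (hn : 1 ≤ n) :
    ∃ (G : Type) (_ : Group G) (A B F : Subgroup G),
      Nonempty (FreeGroupBasis (Fin k) A) ∧
      Nonempty (FreeGroupBasis (Fin l) B) ∧
      (∃ (ι : Type), Nonempty (FreeGroupBasis ι F)) ∧
      F.index = n ∧
      Nonempty (FreeGroupBasis (Fin (n * (k - 1) * (l - 1) + 1)) ↥(A ⊓ B)) := by
  classical
  haveI : NeZero n := ⟨by omega⟩
  set K := k - 1 with hK
  set L := l - 1 with hL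
  refine ⟨HNSharp.Amb n, inferInstance, (HNSharp.Psi1 K L n).range,
    (HNSharp.Psi2 K L n).range, (HNSharp.Finl n).range, ?_, ?_, ?_, ?_, ?_⟩
  · exact ⟨(HNSharp.basisOfInj _ (HNSharp.injPsi1 hn)).reindex
      ((finSuccEquiv K).symm.trans (finCongr (by omega)))⟩
  · exact ⟨(HNSharp.basisOfInj _ (HNSharp.injPsi2 hn)).reindex
      ((finSuccEquiv L).symm.trans (finCongr (by omega)))⟩
  · exact ⟨Option Unit, ⟨HNSharp.basisOfInj _ HNSharp.inl_injective'⟩⟩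
  · exact HNSharp.F_index n hn
  · rw [HNSharp.ABeq hn]
    refine ⟨(HNSharp.basisOfInj _ (HNSharp.injPsi3 hn)).reindex ?_⟩
    refine (Equiv.optionCongr ?_).trans ((finSuccEquiv (n * K * L)).symm.trans (finCongr rfl))
    exact (Equiv.prodCongr (Equiv.refl (Fin n)) finProdFinEquiv).trans
      (finProdFinEquiv.trans (finCongr (mul_assoc n K L).symm))
end

section
/- Let F be a free group of finite rank and H a subgroup of finite index m in F. Then rank(H) − 1 = m · (rank(F) − 1) (Schreier formula). -/
noncomputable section
open scoped Classical
open CategoryTheory CategoryTheory.ActionCategory CategoryTheory.SingleObj Quiver FreeGroup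
open IsFreeGroupoid IsFreeGroupoid.SpanningTree

universe u

/-! ### Counting edges of an arborescence -/

section Arb
variable {V : Type*} [Quiver V] [Arborescence V]

lemma schreier_path_eq {b : V} (p q : Path (Quiver.root V) b) : p = q := Subsingleton.elim p q

lemma schreier_len_succ {a b : V} (e : a ⟶ b) (p : Path (Quiver.root V) a)
    (q : Path (Quiver.root V) b) : q.length = p.length + 1 := by
  rw [schreier_path_eq q (p.cons e), Path.length_cons]

lemma schreier_target_ne_root {a b : V} (e : a ⟶ b) : b ≠ Quiver.root V := by
  intro h
  subst h
  have := schreier_len_succ e default Path.nil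
  simp at this

/-- the last edge of a nontrivial path -/
def schreierLastEdge : ∀ {b : V}, Path (Quiver.root V) b → b ≠ Quiver.root V → Total V
  | _, Path.nil, h => absurd rfl h
  | _, Path.cons _ e, _ => ⟨_, _, e⟩

lemma schreierLastEdge_right {b : V} (p : Path (Quiver.root V) b) (h : b ≠ Quiver.root V) :
    (schreierLastEdge p h).right = b := by
  cases p with
  | nil => exact absurd rfl h
  | cons p e => rfl

lemma schreier_edge_eq_lastEdge {a b : V} (e : a ⟶ b) (p : Path (Quiver.root V) b)
    (h : b ≠ Quiver.root V) : (⟨a, b, e⟩ : Total V) = schreierLastEdge p h := by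
  have : p = (default : Path (Quiver.root V) a).cons e := schreier_path_eq _ _
  subst this
  rfl

/-- arrows of an arborescence are in bijection with non-root vertices -/
def schreierTotalEquivNonRoot : Total V ≃ {b : V // b ≠ Quiver.root V} where
  toFun e := ⟨e.right, schreier_target_ne_root e.hom⟩
  invFun b := schreierLastEdge (default : Path (Quiver.root V) b.1) b.2
  left_inv e := (schreier_edge_eq_lastEdge e.hom _ _).symm
  right_inv b := Subtype.ext (schreierLastEdge_right _ _)

end Arb

/-! ### Counting edges of the symmetrified tree -/

section Sym
variable {V : Type*} [Quiver.{v} V] (T : WideSubquiver (Symmetrify V))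
  [Arborescence (T : Type _)]

lemma schreier_not_both_in_tree {a b : V} (f : a ⟶ b)
    (h1 : Sum.inl f ∈ T a b) (h2 : Sum.inr f ∈ T b a) : False := by
  let e1 : (show T from a) ⟶ (show T from b) := ⟨Sum.inl f, h1⟩
  let e2 : (show T from b) ⟶ (show T from a) := ⟨Sum.inr f, h2⟩
  have ha := schreier_len_succ e1 default default
  have hb := schreier_len_succ e2 default default
  omega

/-- edges of the symmetrified tree are in bijection with the tree's edges -/
def schreierSymTotalEquiv :
    (wideSubquiverEquivSetTotal (wideSubquiverSymmetrify T) : Set (Total V)) ≃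
      Total (T : Type _) where
  toFun e :=
    if h : Sum.inl e.1.hom ∈ T e.1.left e.1.right then ⟨e.1.left, e.1.right, ⟨Sum.inl e.1.hom, h⟩⟩
    else ⟨e.1.right, e.1.left, ⟨Sum.inr e.1.hom, e.2.resolve_left h⟩⟩
  invFun e :=
    match e with
    | ⟨a, b, ⟨Sum.inl f, h⟩⟩ => ⟨⟨a, b, f⟩, Or.inl h⟩
    | ⟨a, b, ⟨Sum.inr f, h⟩⟩ => ⟨⟨b, a, f⟩, Or.inr h⟩
  left_inv e := by
    obtain ⟨⟨a, b, f⟩, he⟩ := e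
    by_cases h : Sum.inl f ∈ T a b <;> simp [h]
  right_inv e := by
    obtain ⟨a, b, ⟨f | f, hf⟩⟩ := e
    · simp [hf]
    · have : ¬ (Sum.inl f ∈ T b a) := fun h => schreier_not_both_in_tree T f h hf
      simp [this]

end Sym

/-! ### A free-group basis for the vertex group at the root -/

section Basis
variable {G : Type u} [Groupoid.{u} G] [IsFreeGroupoid G]
  (T : WideSubquiver (Symmetrify <| Generators G)) [Arborescence T]

lemma schreier_treeHom_root : treeHom T (show G from Quiver.root T)
    = 𝟙 (show G from Quiver.root T) :=
  treeHom_root T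

/-- Basis version of `IsFreeGroupoid.SpanningTree.endIsFree`. -/
def schreierEndBasis :
    FreeGroupBasis ((wideSubquiverEquivSetTotal <| wideSubquiverSymmetrify T)ᶜ : Set _)
      (End (show G from Quiver.root T)) :=
  FreeGroupBasis.ofUniqueLift ((wideSubquiverEquivSetTotal <| wideSubquiverSymmetrify T)ᶜ : Set _)
    (fun e => loopOfHom T (of e.val.hom))
    (by
      intro X _ f
      let f' : Labelling (Generators G) X := fun a b e =>
        if h : e ∈ wideSubquiverSymmetrify T a b then 1 else f ⟨⟨a, b, e⟩, h⟩
      rcases unique_lift f' with ⟨F', hF', uF'⟩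
      refine ⟨F'.mapEnd _, ?_, ?_⟩
      · suffices ∀ {x y} (q : x ⟶ y), F'.map (loopOfHom T q) = (F'.map q : X) by
          rintro ⟨⟨a, b, e⟩, h⟩
          erw [Functor.mapEnd_apply, this, hF']
          exact dif_neg h
        intros x y q
        suffices ∀ {a} (p : Path (Quiver.root T) a), F'.map (homOfPath T p) = 1 by
          simp only [this, treeHom, comp_as_mul, inv_as_inv, loopOfHom, inv_one, mul_one,
            one_mul, Functor.map_inv, Functor.map_comp]
          erw [this, this]
          exact (mul_one _).trans ((congrArg (· * F'.map q) inv_one).trans (one_mul _))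
        intro a p
        induction' p with b c p e ih
        · rw [homOfPath]; exact F'.map_id _
        change F'.map (homOfPath T p ≫ _) = 1; erw [F'.map_comp, comp_as_mul, ih, mul_one]
        rcases e with ⟨e | e, eT⟩
        · erw [hF']
          exact dif_pos (Or.inl eT)
        · erw [F'.map_inv, inv_as_inv, inv_eq_one, hF']
          exact dif_pos (Or.inr eT)
      · intro E hE
        ext x
        suffices (functorOfMonoidHom T E).map x = F'.map x by
          have h1 : E (loopOfHom T x) = F'.map x := this
          have key : ∀ t : (show G from Quiver.root T) ⟶ (show G from Quiver.root T),
              t = 𝟙 _ → t ≫ x ≫ inv t = x := by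
            rintro t rfl
            erw [IsIso.inv_id, Category.id_comp, Category.comp_id]
          have h2 : loopOfHom T x = x := key _ (treeHom_root T)
          rw [h2] at h1
          rw [h1]
          exact (Functor.mapEnd_apply _ _ _).symm
        congr
        apply uF'
        intro a b e
        change E (loopOfHom T _) = dite _ _ _
        split_ifs with h
        · rw [loopOfHom_eq_id T e h, ← End.one_def]; exact E.map_one
        · exact hE ⟨⟨a, b, e⟩, h⟩)

end Basis

/-! ### Counting the generating quiver of the action groupoid -/

section Count
variable {F : Type u} [Group F] [IsFreeGroup F] {A : Type u} [MulAction F A]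

open scoped Classical in
lemma schreier_card_ne {V : Type*} [Finite V] (x : V) :
    Nat.card {b : V // b ≠ x} = Nat.card V - 1 := by
  have := Fintype.ofFinite V
  rw [Nat.card_eq_fintype_card, Nat.card_eq_fintype_card]
  rw [Fintype.card_subtype_compl (p := fun b => b = x), Fintype.card_subtype_eq]

/-- The arrows of the generating quiver of the action groupoid are in bijection with
pairs (generator, point). -/
def schreierTotGenEquiv :
    Total (Generators (ActionCategory F A)) ≃ (IsFreeGroup.Generators F) × A where
  toFun t := (t.hom.val, ActionCategory.back (show ActionCategory F A from t.left))
  invFun p := ⟨objEquiv F A p.2, objEquiv F A (IsFreeGroup.of p.1 • p.2), ⟨p.1, rfl⟩⟩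
  left_inv := by
    rintro ⟨a, b, ⟨e, h⟩⟩
    have ha : (objEquiv F A (ActionCategory.back (show ActionCategory F A from a)))
        = (show ActionCategory F A from a) := back_coe _
    have hb : (objEquiv F A (IsFreeGroup.of e • ActionCategory.back
        (show ActionCategory F A from a))) = (show ActionCategory F A from b) := by
      rw [h]; exact back_coe _
    refine Total.ext ha hb ?_
    rw [Subtype.heq_iff_coe_eq]
    intro x
    dsimp only
    rw [ha, hb]
  right_inv := by
    rintro ⟨e, x⟩
    rfl

end Count

/-! ### Main theorem -/

/-- **Schreier formula**: if `F` is a free group of finite rank `r` and `H` is a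
subgroup of finite index `m`, then `H` is free of some finite rank `s` with
`s - 1 = m * (r - 1)` (as integers). -/
theorem schreier_formula (F : Type*) [Group F] (r : ℕ) (bF : FreeGroupBasis (Fin r) F)
    (H : Subgroup F) (m : ℕ) (hm : H.index = m) (hm0 : m ≠ 0) :
    ∃ s : ℕ, Nonempty (FreeGroupBasis (Fin s) H) ∧ (s : ℤ) - 1 = m * ((r : ℤ) - 1) := by
  letI : IsFreeGroup F := bF.isFreeGroup
  -- the generators of `F` number `r`
  have eGen : IsFreeGroup.Generators F ≃ Fin r :=
    Equiv.ofFreeGroupEquiv ((IsFreeGroup.toFreeGroup F).symm.trans bF.repr)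
  haveI : Finite (IsFreeGroup.Generators F) := Finite.of_equiv _ eGen.symm
  have hGen : Nat.card (IsFreeGroup.Generators F) = r := by
    rw [Nat.card_eq_of_equiv_fin eGen]
  -- the coset space has `m` elements
  set A := F ⧸ H with hA
  have hcardA : Nat.card A = m := hm
  haveI : Finite A := Nat.finite_of_card_ne_zero (by rw [hcardA]; exact hm0)
  -- the action groupoid
  haveI : Finite (ActionCategory F A) := Finite.of_equiv _ (objEquiv F A)
  have hcardV : Nat.card (ActionCategory F A) = m := by
    rw [← hcardA]
    exact Nat.card_congr (objEquiv F A).symm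
  -- the spanning tree
  let r0 : ActionCategory F A := objEquiv F A ((1 : F) : A)
  haveI : MulAction.IsPretransitive F A := MulAction.isPretransitive_quotient F H
  haveI : Nonempty A := ⟨((1 : F) : A)⟩
  letI : RootedConnected (show Symmetrify (Generators (ActionCategory F A)) from r0) :=
    @generators_connected (ActionCategory F A) _ (inferInstance : IsConnected (ActionCategory F A)) _ r0
  let T : WideSubquiver (Symmetrify (Generators (ActionCategory F A))) :=
    geodesicSubtree (show Symmetrify (Generators (ActionCategory F A)) from r0)
  letI : Arborescence (T : Type _) := geodesicArborescence _
  -- the basis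
  let S : Set (Total (Generators (ActionCategory F A))) :=
    ((wideSubquiverEquivSetTotal <| wideSubquiverSymmetrify T)ᶜ : Set _)
  let b0 :=
    schreierEndBasis T
  let bH : FreeGroupBasis S H := b0.map (endMulEquivSubgroup H)
  -- counting
  haveI : Finite (Total (Generators (ActionCategory F A))) :=
    Finite.of_equiv _ schreierTotGenEquiv.symm
  have hTot : Nat.card (Total (Generators (ActionCategory F A))) = r * m := by
    rw [Nat.card_congr schreierTotGenEquiv, Nat.card_prod, hGen]
    congr 1
  have hSym : Nat.card
      (wideSubquiverEquivSetTotal (wideSubquiverSymmetrify T) : Set (Total _)) = m - 1 := by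
    rw [Nat.card_congr (schreierSymTotalEquiv T), Nat.card_congr schreierTotalEquivNonRoot]
    haveI : Finite (T : Type _) := by
      show Finite (ActionCategory F A); infer_instance
    rw [schreier_card_ne]
    have : Nat.card (T : Type _) = m := hcardV
    omega
  -- cardinality of the complement
  set n := Nat.card (wideSubquiverEquivSetTotal (wideSubquiverSymmetrify T) : Set (Total _))
    with hn
  have hsplit := Set.ncard_add_ncard_compl
    (wideSubquiverEquivSetTotal (wideSubquiverSymmetrify T) : Set (Total _))
  simp only [Set.ncard_univ, ← Nat.card_coe_set_eq] at hsplit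
  set s := Nat.card S with hs
  have hkey : (m - 1) + s = r * m := by
    rw [← hSym, ← hTot]
    exact hsplit
  refine ⟨s, ⟨bH.reindex (Finite.equivFin S)⟩, ?_⟩
  · have hm1 : 1 ≤ m := Nat.one_le_iff_ne_zero.mpr hm0
    have hz : (s : ℤ) + ((m : ℤ) - 1) = (r : ℤ) * (m : ℤ) := by
      have := hkey
      zify [hm1] at this
      linarith
    linarith [hz]
end
end

section
/- Suppose groups A and B are subgroups of a group G acting freely on a set X, Y ⊆ X is A-invariant and Z ⊆ X is B-invariant. Then the number of (A ∩ B)-orbits in Y ∩ Z is at most the product of the number of A-orbits in Y and the number of B-orbits in Z. -/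
/-- **Orbit-intersection lemma**: if `A, B ≤ G`, `G` acts freely on `X`, `Y` is an
`A`-invariant subset and `Z` a `B`-invariant subset, then the number of
`(A ⊓ B)`-orbits in `Y ∩ Z` is at most the number of `A`-orbits in `Y` times the
number of `B`-orbits in `Z` (as cardinals). -/
theorem orbit_intersection_lemma (G X : Type*) [Group G] [MulAction G X]
    (hfree : ∀ (g : G) (x : X), g • x = x → g = 1)
    (A B : Subgroup G) (Y Z : Set X)
    (hY : ∀ a ∈ A, ∀ y ∈ Y, a • y ∈ Y) (hZ : ∀ b ∈ B, ∀ z ∈ Z, b • z ∈ Z) :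
    Cardinal.mk {s : Set X // ∃ x ∈ Y ∩ Z, s = MulAction.orbit ↥(A ⊓ B) x} ≤
      Cardinal.mk {s : Set X // ∃ x ∈ Y, s = MulAction.orbit ↥A x} *
        Cardinal.mk {s : Set X // ∃ x ∈ Z, s = MulAction.orbit ↥B x} := by
  have hle : Cardinal.mk {s : Set X // ∃ x ∈ Y ∩ Z, s = MulAction.orbit ↥(A ⊓ B) x} ≤
      Cardinal.mk ({s : Set X // ∃ x ∈ Y, s = MulAction.orbit ↥A x} ×
        {s : Set X // ∃ x ∈ Z, s = MulAction.orbit ↥B x}) := by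
    apply Cardinal.mk_le_of_injective
      (f := fun s =>
        (⟨MulAction.orbit ↥A s.2.choose, s.2.choose, s.2.choose_spec.1.1, rfl⟩,
         ⟨MulAction.orbit ↥B s.2.choose, s.2.choose, s.2.choose_spec.1.2, rfl⟩))
    intro s t h
    obtain ⟨h1, h2⟩ := Prod.mk.injEq .. ▸ h
    have hA : MulAction.orbit ↥A s.2.choose = MulAction.orbit ↥A t.2.choose :=
      congrArg Subtype.val h1
    have hB : MulAction.orbit ↥B s.2.choose = MulAction.orbit ↥B t.2.choose :=
      congrArg Subtype.val h2
    set x := s.2.choose with hx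
    set x' := t.2.choose with hx'
    obtain ⟨a, ha⟩ : x' ∈ MulAction.orbit ↥A x := hA ▸ MulAction.mem_orbit_self x'
    obtain ⟨b, hb⟩ : x' ∈ MulAction.orbit ↥B x := hB ▸ MulAction.mem_orbit_self x'
    have ha' : (a : G) • x = x' := ha
    have hb' : (b : G) • x = x' := hb
    have hab : (a : G) • x = (b : G) • x := by rw [ha', hb']
    have hfix : ((b : G)⁻¹ * (a : G)) • x = x := by
      rw [mul_smul, hab, inv_smul_smul]
    have heq : (a : G) = (b : G) := by
      have := hfree _ _ hfix
      rwa [inv_mul_eq_one, eq_comm] at this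
    have hmem : (a : G) ∈ A ⊓ B := ⟨a.2, heq ▸ b.2⟩
    have horb : x' ∈ MulAction.orbit ↥(A ⊓ B) x := by
      exact ⟨⟨(a : G), hmem⟩, ha'⟩
    have : MulAction.orbit ↥(A ⊓ B) x = MulAction.orbit ↥(A ⊓ B) x' :=
      (MulAction.orbit_eq_iff.mpr horb).symm
    apply Subtype.ext
    rw [s.2.choose_spec.2, t.2.choose_spec.2, ← hx, ← hx', this]
  refine hle.trans ?_
  rw [Cardinal.mk_prod, Cardinal.lift_id, Cardinal.lift_id]
end

section
/- If a finitely generated group G acts on a forest L with finitely many connected components, then every finite set X of vertices of L is contained in a G-invariant subforest L_X ⊇ X whose intersection with each component of L is connected, and the action of G on L_X is cocompact. -/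
/-- **Invariant-forest lemma**: if a finitely generated group `G` acts on a forest `L`
with finitely many connected components, then any finite set `X` of vertices is
contained in a `G`-invariant subforest whose intersection with each component of `L`
is connected and on which `G` acts cocompactly. -/
theorem invariant_subforest
    (G V : Type*) [Group G] (hG : Group.FG G) [MulAction G V]
    (L : SimpleGraph V) (hforest : L.IsAcyclic) (hcomp : Finite L.ConnectedComponent)
    (hact : ∀ (g : G) (v w : V), L.Adj v w → L.Adj (g • v) (g • w))
    (X : Finset V) :
    ∃ H : L.Subgraph,
      ↑X ⊆ H.verts ∧
      (∀ (g : G), ∀ v ∈ H.verts, g • v ∈ H.verts) ∧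
      (∀ (g : G) (v w : V), H.Adj v w → H.Adj (g • v) (g • w)) ∧
      (∀ v w : H.verts, L.Reachable ↑v ↑w → H.coe.Reachable v w) ∧
      {s : Set V | ∃ v ∈ H.verts, s = MulAction.orbit G v}.Finite ∧
      {s : Set (V × V) | ∃ p : V × V, H.Adj p.1 p.2 ∧ s = MulAction.orbit G p}.Finite := by
  classical
  obtain ⟨S, hScl, hSfin⟩ := Group.fg_iff.mp hG
  haveI : Fintype L.ConnectedComponent := Fintype.ofFinite _
  set c : V → L.ConnectedComponent := L.connectedComponentMk with hc
  have hbex : ∀ C : L.ConnectedComponent, ∃ v, c v = C := fun C => C.exists_rep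
  choose b hbc using hbex
  -- equivariance of reachability / components
  have hreach : ∀ (g : G) (v w : V), L.Reachable v w → L.Reachable (g • v) (g • w) := by
    intro g v w h
    exact h.map ⟨fun v => g • v, fun h => hact g _ _ h⟩
  have hcg : ∀ (g : G) (v w : V), c v = c w → c (g • v) = c (g • w) := fun g v w h =>
    SimpleGraph.ConnectedComponent.eq.mpr (hreach g v w (SimpleGraph.ConnectedComponent.eq.mp h))
  -- index type and walks
  let I := {x // x ∈ X} ⊕ L.ConnectedComponent ⊕ ({g // g ∈ hSfin.toFinset} × L.ConnectedComponent)
  let st : I → V := fun i => match i with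
    | .inl x => (x : V)
    | .inr (.inl C) => b C
    | .inr (.inr (s, C)) => (s : G) • b C
  have hst : ∀ i, L.Reachable (st i) (b (c (st i))) := fun i =>
    SimpleGraph.ConnectedComponent.eq.mp (hbc (c (st i))).symm
  have W : ∀ i, L.Walk (st i) (b (c (st i))) := fun i => (hst i).some
  let K : L.Subgraph := ⨆ i, (W i).toSubgraph
  have hKle : ∀ i, (W i).toSubgraph ≤ K := fun i => by exact le_iSup (fun j => (W j).toSubgraph) i
  have hstK : ∀ i, st i ∈ K.verts := fun i => (hKle i).1 (W i).start_mem_verts_toSubgraph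
  -- the invariant subgraph
  let H : L.Subgraph :=
    { verts := {v | ∃ g : G, g⁻¹ • v ∈ K.verts}
      Adj := fun v w => ∃ g : G, K.Adj (g⁻¹ • v) (g⁻¹ • w)
      adj_sub := by
        rintro v w ⟨g, h⟩
        have := hact g _ _ (K.adj_sub h)
        simpa using this
      edge_vert := by rintro v w ⟨g, h⟩; exact ⟨g, K.edge_vert h⟩
      symm := by constructor; rintro v w ⟨g, h⟩; exact ⟨g, h.symm⟩ }
  have hKH : K ≤ H := by
    constructor
    · intro v hv; exact ⟨1, by simpa using hv⟩
    · intro v w h; exact ⟨1, by simpa using h⟩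
  have hHinv : ∀ (g : G), ∀ v ∈ H.verts, g • v ∈ H.verts := by
    rintro g v ⟨g₀, h⟩
    exact ⟨g * g₀, by simpa [mul_smul] using h⟩
  have hHadj : ∀ (g : G) (v w : V), H.Adj v w → H.Adj (g • v) (g • w) := by
    rintro g v w ⟨g₀, h⟩
    exact ⟨g * g₀, by simpa [mul_smul] using h⟩
  -- equivariance of H-reachability
  have hmapR : ∀ (g : G) (v w : V) (hv : v ∈ H.verts) (hw : w ∈ H.verts),
      H.coe.Reachable ⟨v, hv⟩ ⟨w, hw⟩ →
      H.coe.Reachable ⟨g • v, hHinv g v hv⟩ ⟨g • w, hHinv g w hw⟩ := by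
    intro g v w hv hw h
    exact h.map (⟨fun x => ⟨g • x.1, hHinv g x.1 x.2⟩,
      fun {a b} h => hHadj g a.1 b.1 h⟩ : H.coe →g H.coe)
  have hcast : ∀ {v w v' w' : V} (hv : v ∈ H.verts) (hw : w ∈ H.verts)
      (hv' : v' ∈ H.verts) (hw' : w' ∈ H.verts), v = v' → w = w' →
      H.coe.Reachable ⟨v, hv⟩ ⟨w, hw⟩ → H.coe.Reachable ⟨v', hv'⟩ ⟨w', hw'⟩ := by
    rintro v w v' w' hv hw hv' hw' rfl rfl h; exact h
  -- vertices of K reach their basepoint within H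
  have hK2H : ∀ v, v ∈ K.verts → ∃ (hv : v ∈ H.verts) (hbv : b (c v) ∈ H.verts),
      H.coe.Reachable ⟨v, hv⟩ ⟨b (c v), hbv⟩ := by
    intro v hv
    rw [show K = ⨆ i, (W i).toSubgraph from rfl, SimpleGraph.Subgraph.verts_iSup] at hv
    obtain ⟨i, hi⟩ := Set.mem_iUnion.mp hv
    have hvK : v ∈ K.verts := (hKle i).1 hi
    have hsupp : v ∈ (W i).support := (SimpleGraph.Walk.mem_verts_toSubgraph _).mp hi
    have hcv : c v = c (st i) := by
      have : L.Reachable (st i) v := ((W i).takeUntil v hsupp).reachable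
      exact (SimpleGraph.ConnectedComponent.eq.mpr this).symm
    have hbe : b (c (st i)) ∈ (W i).toSubgraph.verts := (W i).end_mem_verts_toSubgraph
    have hr : (W i).toSubgraph.coe.Reachable ⟨v, hi⟩ ⟨b (c (st i)), hbe⟩ :=
      (W i).toSubgraph_connected ⟨v, hi⟩ ⟨b (c (st i)), hbe⟩
    have hr' := hr.map (SimpleGraph.Subgraph.inclusion (le_trans (hKle i) hKH))
    refine ⟨hKH.1 hvK, ?_, ?_⟩
    · rw [hcv]; exact hKH.1 ((hKle i).1 hbe)
    · exact hcast _ _ _ _ rfl (by rw [hcv]) hr'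
  -- basepoint translates reach their basepoints within H
  have hL3 : ∀ (g : G), ∀ C, ∃ (hv : g • b C ∈ H.verts) (hbv : b (c (g • b C)) ∈ H.verts),
      H.coe.Reachable ⟨g • b C, hv⟩ ⟨b (c (g • b C)), hbv⟩ := by
    intro g
    have hg : g ∈ Subgroup.closure S := by rw [hScl]; trivial
    induction hg using Subgroup.closure_induction with
    | mem s hs =>
      intro C
      have : s • b C ∈ K.verts := hstK (.inr (.inr (⟨s, hSfin.mem_toFinset.mpr hs⟩, C)))
      exact hK2H _ this
    | one =>
      intro C
      have h1 : (1 : G) • b C = b C := one_smul _ _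
      have h2 : b (c ((1 : G) • b C)) = b C := by rw [h1, hbc]
      have hm : b C ∈ H.verts := hKH.1 (hstK (.inr (.inl C)))
      exact ⟨by rw [h1]; exact hm, by rw [h2]; exact hm,
        hcast hm hm _ _ h1.symm h2.symm (SimpleGraph.Reachable.refl _)⟩
    | mul x y hx hy ihx ihy =>
      intro C
      obtain ⟨hv1, hb1, h1⟩ := ihy C
      obtain ⟨hv2, hb2, h2⟩ := ihx (c (y • b C))
      have hmap := hmapR x _ _ hv1 hb1 h1
      have key : c (x • b (c (y • b C))) = c ((x * y) • b C) := by
        rw [mul_smul]; exact hcg x _ _ (hbc _)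
      have e1 : x • (y • b C) = (x * y) • b C := (mul_smul x y (b C)).symm
      refine ⟨by rw [← e1]; exact hHinv x _ hv1, by rw [← key]; exact hb2, ?_⟩
      have := hmap.trans (hcast hv2 hb2 (hHinv x _ hb1) hb2 rfl rfl h2)
      exact hcast _ _ _ _ e1 (by rw [key]) this
    | inv x hx ihx =>
      intro C
      obtain ⟨hv1, hb1, h1⟩ := ihx (c (x⁻¹ • b C))
      have key : c (x • b (c (x⁻¹ • b C))) = C := by
        have := hcg x _ _ (hbc (c (x⁻¹ • b C)))
        rw [this, smul_inv_smul, hbc]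
      have h1' : H.coe.Reachable ⟨x • b (c (x⁻¹ • b C)), hv1⟩ ⟨b C, by rw [← key]; exact hb1⟩ :=
        hcast _ _ _ _ rfl (by rw [key]) h1
      have hmap := hmapR x⁻¹ _ _ hv1 (by rw [← key]; exact hb1) h1'
      have e1 : x⁻¹ • x • b (c (x⁻¹ • b C)) = b (c (x⁻¹ • b C)) := inv_smul_smul _ _
      exact ⟨hHinv x⁻¹ _ (by rw [← key]; exact hb1), by rw [← e1]; exact hHinv x⁻¹ _ hv1,
        hcast _ _ _ _ rfl e1 hmap.symm⟩
  -- every vertex of H reaches its basepoint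
  have hmain : ∀ v (hv : v ∈ H.verts), ∃ hbv : b (c v) ∈ H.verts,
      H.coe.Reachable ⟨v, hv⟩ ⟨b (c v), hbv⟩ := by
    intro v hv
    obtain ⟨g, hk⟩ := id hv
    obtain ⟨hk1, hk2, h1⟩ := hK2H _ hk
    have hmap := hmapR g _ _ hk1 hk2 h1
    obtain ⟨hv2, hb2, h2⟩ := hL3 g (c (g⁻¹ • v))
    have e1 : g • g⁻¹ • v = v := smul_inv_smul _ _
    have key : c (g • b (c (g⁻¹ • v))) = c v := by
      have := hcg g _ _ (hbc (c (g⁻¹ • v)))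
      rw [this, smul_inv_smul]
    have h2' := hcast hv2 hb2 hv2 (show b (c v) ∈ H.verts by rw [← key]; exact hb2) rfl (by rw [key]) h2
    refine ⟨by rw [← key]; exact hb2, ?_⟩
    exact (hcast (hHinv g _ hk1) (hHinv g _ hk2) hv (hHinv g _ hk2) e1 rfl hmap).trans h2'
  -- finiteness of K
  have hKvfin : K.verts.Finite := by
    rw [show K = ⨆ i, (W i).toSubgraph from rfl, SimpleGraph.Subgraph.verts_iSup]
    exact Set.finite_iUnion fun i => by
      rw [SimpleGraph.Walk.verts_toSubgraph]; exact (W i).support.finite_toSet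
  refine ⟨H, ?_, hHinv, hHadj, ?_, ?_, ?_⟩
  · intro x hx
    exact hKH.1 (hstK (.inl ⟨x, hx⟩))
  · rintro ⟨v, hv⟩ ⟨w, hw⟩ hr
    obtain ⟨hbv, h1⟩ := hmain v hv
    obtain ⟨hbw, h2⟩ := hmain w hw
    have hcvw : c v = c w := SimpleGraph.ConnectedComponent.eq.mpr hr
    exact h1.trans ((hcast hbw hbw _ _ (by rw [hcvw]) rfl (SimpleGraph.Reachable.refl _)).trans h2.symm)
  · apply Set.Finite.subset (hKvfin.image (fun v => MulAction.orbit G v))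
    rintro s ⟨v, ⟨g, hk⟩, rfl⟩
    refine ⟨g⁻¹ • v, hk, ?_⟩
    show MulAction.orbit G (g⁻¹ • v) = MulAction.orbit G v
    rw [← MulAction.orbit_smul g (g⁻¹ • v), smul_inv_smul]
  · have hEfin : {p : V × V | K.Adj p.1 p.2}.Finite := by
      apply Set.Finite.subset (hKvfin.prod hKvfin)
      rintro ⟨a, d⟩ h
      exact ⟨K.edge_vert h, K.edge_vert h.symm⟩
    apply Set.Finite.subset (hEfin.image (fun p => MulAction.orbit G p))
    rintro s ⟨p, ⟨g, hadj⟩, rfl⟩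
    refine ⟨g⁻¹ • p, hadj, ?_⟩
    show MulAction.orbit G (g⁻¹ • p) = MulAction.orbit G p
    rw [← MulAction.orbit_smul g (g⁻¹ • p), smul_inv_smul]
end

section
/- A free product of left-orderable groups is left-orderable. In particular, every free group is left-orderable. -/
/-- A group is left-orderable if it admits a linear order invariant under left
multiplication. -/
def IsLeftOrderable (G : Type*) [Group G] : Prop :=
  ∃ r : G → G → Prop, IsLinearOrder G r ∧ ∀ x y z : G, r x y → r (z * x) (z * y)

open Monoid.CoprodI Finsupp
namespace Vino
open scoped Classical
variable {ι : Type*} {M : ι → Type*} [∀ i, Group (M i)]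
abbrev V (M : ι → Type*) [∀ i, Group (M i)] : Type _ := Word M →₀ ℤ
noncomputable def e (w : Word M) : V M := Finsupp.single w 1
noncomputable def e' {j : ι} (x : M j) (t : Word M) (ht : t.fstIdx ≠ some j) : V M :=
  if h : x = 1 then 0 else Finsupp.single (Word.cons x t ht h) 1
theorem fstIdx_empty_ne (j : ι) : (Word.empty : Word M).fstIdx ≠ some j := by
  simp [Word.fstIdx, Word.empty]
theorem fstIdx_cons_ne {i j : ι} (h : j ≠ i) (x : M i) (w : Word M) (h1 : w.fstIdx ≠ some i)
    (h2 : x ≠ 1) : (Word.cons x w h1 h2).fstIdx ≠ some j := by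
  rw [Word.fstIdx_cons]; simp [h.symm]
noncomputable def Lb {j : ι} (m : M j) (w : Word M) : V M :=
  Word.consRecOn w
    (e Word.empty + e' m Word.empty (fstIdx_empty_ne j))
    (fun i x w' h1 h2 _ =>
      if h : j = i then
        e' ((h ▸ m) * x) w' h1 - e' (h ▸ m) w' h1
      else e (Word.cons x w' h1 h2) + e' m (Word.cons x w' h1 h2) (fstIdx_cons_ne h x w' h1 h2))
@[simp] theorem Lb_empty {j : ι} (m : M j) :
    Lb m (Word.empty) = e Word.empty + e' m Word.empty (fstIdx_empty_ne j) := rfl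
theorem Lb_cons_eq {j : ι} (m x : M j) (w' : Word M) (h1 : w'.fstIdx ≠ some j) (h2 : x ≠ 1) :
    Lb m (Word.cons x w' h1 h2) = e' (m * x) w' h1 - e' m w' h1 := by
  unfold Lb; rw [Word.consRecOn_cons, dif_pos rfl]
theorem Lb_cons_ne {i j : ι} (h : j ≠ i) (m : M j) (x : M i) (w' : Word M)
    (h1 : w'.fstIdx ≠ some i) (h2 : x ≠ 1) :
    Lb m (Word.cons x w' h1 h2) = e (Word.cons x w' h1 h2) +
      e' m (Word.cons x w' h1 h2) (fstIdx_cons_ne h x w' h1 h2) := by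
  unfold Lb; rw [Word.consRecOn_cons, dif_neg h]
theorem Lb_of_fstIdx_ne {j : ι} (m : M j) (w : Word M) (hw : w.fstIdx ≠ some j) :
    Lb m w = e w + e' m w hw := by
  induction w using Word.consRecOn with
  | empty => rw [Lb_empty]
  | cons i x w' h1 h2 ih =>
    have hji : j ≠ i := by intro hh; subst hh; exact hw (Word.fstIdx_cons x w' h1 h2)
    rw [Lb_cons_ne hji]

/-- The ℤ-linear action of the letter `m`. -/
noncomputable def Lm {j : ι} (m : M j) : V M →ₗ[ℤ] V M :=
  Finsupp.lsum ℤ fun w => LinearMap.toSpanSingleton ℤ (V M) (Lb m w)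

theorem Lm_single {j : ι} (m : M j) (w : Word M) (b : ℤ) :
    Lm m (Finsupp.single w b) = b • Lb m w := by
  simp [Lm, Finsupp.lsum_single, LinearMap.toSpanSingleton_apply]

theorem Lm_e {j : ι} (m : M j) (w : Word M) : Lm m (e w) = Lb m w := by
  rw [e, Lm_single, one_smul]

theorem Lm_e' {j : ι} (m x : M j) (t : Word M) (ht : t.fstIdx ≠ some j) :
    Lm m (e' x t ht) = e' (m * x) t ht - e' m t ht := by
  by_cases h : x = 1
  · subst h
    rw [e', dif_pos rfl, map_zero, mul_one, sub_self]
  · rw [e', dif_neg h, Lm_single, one_smul, Lb_cons_eq]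

theorem e'_one {j : ι} (t : Word M) (ht : t.fstIdx ≠ some j) : e' (1 : M j) t ht = 0 :=
  dif_pos rfl

theorem e'_eq {j : ι} {x : M j} (hx : x ≠ 1) (t : Word M) (ht : t.fstIdx ≠ some j) :
    e' x t ht = e (Word.cons x t ht hx) :=
  dif_neg hx

theorem Lb_one {j : ι} (w : Word M) : Lb (1 : M j) w = e w := by
  induction w using Word.consRecOn with
  | empty => rw [Lb_empty, e'_one, add_zero]
  | cons i x w' h1 h2 ih =>
    by_cases h : j = i
    · subst h
      rw [Lb_cons_eq, one_mul, e'_one, sub_zero, e'_eq h2]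
    · rw [Lb_cons_ne h, e'_one, add_zero]

theorem Lm_Lb {j : ι} (m m' : M j) (w : Word M) : Lm m (Lb m' w) = Lb (m * m') w := by
  induction w using Word.consRecOn with
  | empty =>
    rw [Lb_empty, map_add, Lm_e, Lb_empty, Lm_e', Lb_empty]
    abel
  | cons i x w' h1 h2 ih =>
    by_cases h : j = i
    · subst h
      rw [Lb_cons_eq, map_sub, Lm_e', Lm_e', Lb_cons_eq, mul_assoc]
      abel
    · rw [Lb_cons_ne h, map_add, Lm_e, Lm_e', Lb_cons_ne h, Lb_cons_ne h]
      abel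

/-- `Lm` as a monoid hom into the endomorphism monoid. -/
noncomputable def LJ (j : ι) : M j →* Module.End ℤ (V M) where
  toFun m := Lm m
  map_one' := by
    apply Finsupp.lhom_ext
    intro w b
    rw [Lm_single, Lb_one]
    show _ = Finsupp.single w b
    rw [e, Finsupp.smul_single, smul_eq_mul, mul_one]
  map_mul' m m' := by
    apply Finsupp.lhom_ext
    intro w b
    show Lm (m * m') (Finsupp.single w b) = Lm m (Lm m' (Finsupp.single w b))
    rw [Lm_single, Lm_single, map_smul, Lm_Lb]

/-- The Magnus-type representation of the free product. -/
noncomputable def Lrep : Monoid.CoprodI M →* Module.End ℤ (V M) :=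
  Monoid.CoprodI.lift (fun j => LJ j)

theorem Lrep_of {j : ι} (m : M j) : Lrep (of m) = Lm m :=
  Monoid.CoprodI.lift_of _ m

/-- the orbit map -/
noncomputable def psi (g : Monoid.CoprodI M) : V M := Lrep g (e Word.empty)

theorem psi_mul (z g : Monoid.CoprodI M) : psi (z * g) = Lrep z (psi g) := by
  rw [psi, map_mul]
  rfl


/-! ### lengths and triangularity -/

def len (w : Word M) : ℕ := w.toList.length

theorem len_cons {j : ι} (x : M j) (t : Word M) (ht : t.fstIdx ≠ some j) (hx : x ≠ 1) :
    len (Word.cons x t ht hx) = len t + 1 := rfl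

theorem len_empty : len (Word.empty : Word M) = 0 := rfl

theorem len_eq_zero {w : Word M} (h : len w = 0) : w = Word.empty := by
  rcases w with ⟨l, h1, h2⟩
  cases l with
  | nil => rfl
  | cons a t => simp [len] at h

theorem supp_e' {j : ι} (x : M j) (t : Word M) (ht : t.fstIdx ≠ some j) :
    ∀ u ∈ (e' x t ht).support, len u = len t + 1 := by
  intro u hu
  by_cases h : x = 1
  · subst h; rw [e'_one] at hu; simp at hu
  · rw [e'_eq h] at hu
    rw [e, Finsupp.support_single_ne_zero _ one_ne_zero] at hu
    simp at hu
    subst hu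
    rfl

theorem supp_e (w : Word M) : (e w).support = {w} :=
  Finsupp.support_single_ne_zero _ one_ne_zero

theorem supp_Lb {j : ι} (m : M j) (w : Word M) :
    ∀ u ∈ (Lb m w).support, len w ≤ len u ∧ len u ≤ len w + 1 := by
  intro u hu
  induction w using Word.consRecOn with
  | empty =>
    rw [Lb_empty] at hu
    rcases Finset.mem_union.mp (Finsupp.support_add hu) with h | h
    · rw [supp_e] at h
      simp at h
      subst h
      simp [len_empty]
    · have := supp_e' _ _ _ u h
      rw [len_empty] at this ⊢
      omega
  | cons i x w' h1 h2 ih =>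
    by_cases h : j = i
    · subst h
      rw [Lb_cons_eq] at hu
      rcases Finset.mem_union.mp (Finsupp.support_sub hu) with hh | hh
      · have := supp_e' _ _ _ u hh
        rw [len_cons]
        omega
      · have := supp_e' _ _ _ u hh
        rw [len_cons]
        omega
    · rw [Lb_cons_ne h] at hu
      rcases Finset.mem_union.mp (Finsupp.support_add hu) with hh | hh
      · rw [supp_e] at hh
        simp at hh
        subst hh
        omega
      · have := supp_e' _ _ _ u hh
        omega

theorem Lm_eq_sum {j : ι} (m : M j) (x : V M) : Lm m x = x.sum fun w b => b • Lb m w := by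
  rw [Lm, Finsupp.lsum_apply]
  apply Finsupp.sum_congr
  intro w _
  rw [LinearMap.toSpanSingleton_apply]

theorem supp_Lm {j : ι} (m : M j) (x : V M) :
    ∀ u ∈ (Lm m x).support, ∃ w ∈ x.support, len w ≤ len u ∧ len u ≤ len w + 1 := by
  intro u hu
  rw [Lm_eq_sum] at hu
  have := Finsupp.support_sum hu
  rcases Finset.mem_biUnion.mp this with ⟨w, hw, hu'⟩
  refine ⟨w, hw, ?_⟩
  have : u ∈ (Lb m w).support := Finsupp.support_smul hu'
  exact supp_Lb m w u this

/-- normal form triangularity -/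
theorem psi_prod (w : Word M) :
    ∃ err : V M, psi w.prod = e w + err ∧ ∀ u ∈ err.support, len u < len w := by
  induction w using Word.consRecOn with
  | empty =>
    refine ⟨0, ?_, by simp⟩
    rw [Word.prod_empty, psi, map_one]
    show (1 : Module.End ℤ (V M)) (e Word.empty) = _
    rw [Module.End.one_apply, add_zero]
  | cons i x w' h1 h2 ih =>
    obtain ⟨err', hpsi', herr'⟩ := ih
    rw [Word.prod_cons]
    refine ⟨e w' + Lm x err', ?_, ?_⟩
    · rw [psi_mul, Lrep_of, hpsi', map_add, Lm_e, Lb_of_fstIdx_ne x w' h1, e'_eq h2]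
      abel
    · intro u hu
      rcases Finset.mem_union.mp (Finsupp.support_add hu) with hh | hh
      · rw [supp_e] at hh
        simp at hh
        subst hh
        rw [len_cons]
        omega
      · obtain ⟨v, hv, hlen1, hlen2⟩ := supp_Lm x err' u hh
        have := herr' v hv
        rw [len_cons]
        omega

theorem prod_equiv (g : Monoid.CoprodI M) : (Word.equiv (M := M) g).prod = g :=
  Word.equiv.symm_apply_apply g

theorem psi_inj_aux {g h : Monoid.CoprodI M} (hpsi : psi g = psi h)
    (hlen : len (Word.equiv h) ≤ len (Word.equiv g)) : g = h := by
  set w := Word.equiv (M := M) g with hw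
  set u := Word.equiv (M := M) h with hu
  obtain ⟨err, he, herr⟩ := psi_prod w
  obtain ⟨err', he', herr'⟩ := psi_prod u
  rw [prod_equiv] at he he'
  by_contra hne
  have hwu : w ≠ u := by
    intro hh
    exact hne (by rw [← prod_equiv g, ← prod_equiv h, ← hw, ← hu, hh])
  have h1 : (psi g) w = 1 := by
    rw [he]
    have : err w = 0 := by
      by_contra h0
      exact absurd (herr w (Finsupp.mem_support_iff.mpr h0)) (lt_irrefl _)
    rw [Finsupp.add_apply, this, add_zero, e, Finsupp.single_apply, if_pos rfl]
  have h2 : (psi h) w = 0 := by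
    rw [he']
    have hz : err' w = 0 := by
      by_contra h0
      have := herr' w (Finsupp.mem_support_iff.mpr h0)
      omega
    rw [Finsupp.add_apply, hz, add_zero, e, Finsupp.single_apply, if_neg (Ne.symm hwu)]
  rw [hpsi] at h1
  rw [h1] at h2
  exact one_ne_zero h2

theorem psi_injective : Function.Injective (psi (M := M)) := by
  intro g h hpsi
  rcases le_total (len (Word.equiv h)) (len (Word.equiv g)) with hl | hl
  · exact psi_inj_aux hpsi hl
  · exact (psi_inj_aux hpsi.symm hl).symm


/-! ### the degree-preserving and degree-raising parts of the action -/

noncomputable def Ab {j : ι} (m : M j) (w : Word M) : V M :=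
  Word.consRecOn w (e Word.empty)
    (fun i x w' h1 h2 _ =>
      if h : j = i then
        e' ((h ▸ m) * x) w' h1 - e' (h ▸ m) w' h1
      else e (Word.cons x w' h1 h2))

@[simp] theorem Ab_empty {j : ι} (m : M j) : Ab m (Word.empty) = e Word.empty := rfl

theorem Ab_cons_eq {j : ι} (m x : M j) (w' : Word M) (h1 : w'.fstIdx ≠ some j) (h2 : x ≠ 1) :
    Ab m (Word.cons x w' h1 h2) = e' (m * x) w' h1 - e' m w' h1 := by
  unfold Ab; rw [Word.consRecOn_cons, dif_pos rfl]

theorem Ab_cons_ne {i j : ι} (h : j ≠ i) (m : M j) (x : M i) (w' : Word M)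
    (h1 : w'.fstIdx ≠ some i) (h2 : x ≠ 1) :
    Ab m (Word.cons x w' h1 h2) = e (Word.cons x w' h1 h2) := by
  unfold Ab; rw [Word.consRecOn_cons, dif_neg h]

noncomputable def Cb {j : ι} (m : M j) (w : Word M) : V M := Lb m w - Ab m w

theorem Lb_decomp {j : ι} (m : M j) (w : Word M) : Lb m w = Ab m w + Cb m w := by
  rw [Cb]; abel

theorem Cb_empty {j : ι} (m : M j) : Cb m (Word.empty) = e' m Word.empty (fstIdx_empty_ne j) := by
  rw [Cb, Lb_empty, Ab_empty]; abel

theorem Cb_cons_eq {j : ι} (m x : M j) (w' : Word M) (h1 : w'.fstIdx ≠ some j) (h2 : x ≠ 1) :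
    Cb m (Word.cons x w' h1 h2) = 0 := by
  rw [Cb, Lb_cons_eq, Ab_cons_eq, sub_self]

theorem Cb_cons_ne {i j : ι} (h : j ≠ i) (m : M j) (x : M i) (w' : Word M)
    (h1 : w'.fstIdx ≠ some i) (h2 : x ≠ 1) :
    Cb m (Word.cons x w' h1 h2) =
      e' m (Word.cons x w' h1 h2) (fstIdx_cons_ne h x w' h1 h2) := by
  rw [Cb, Lb_cons_ne h, Ab_cons_ne h]; abel

theorem supp_Ab {j : ι} (m : M j) (w : Word M) :
    ∀ u ∈ (Ab m w).support, len u = len w := by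
  intro u hu
  induction w using Word.consRecOn with
  | empty =>
    rw [Ab_empty, supp_e] at hu
    simp at hu; subst hu; rfl
  | cons i x w' h1 h2 ih =>
    by_cases h : j = i
    · subst h
      rw [Ab_cons_eq] at hu
      rcases Finset.mem_union.mp (Finsupp.support_sub hu) with hh | hh <;>
        · have := supp_e' _ _ _ u hh
          rw [len_cons]; omega
    · rw [Ab_cons_ne h, supp_e] at hu
      simp at hu; subst hu; rfl

theorem supp_Cb {j : ι} (m : M j) (w : Word M) :
    ∀ u ∈ (Cb m w).support, len u = len w + 1 := by
  intro u hu
  induction w using Word.consRecOn with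
  | empty =>
    rw [Cb_empty] at hu
    have := supp_e' _ _ _ u hu
    rw [len_empty] at this ⊢; omega
  | cons i x w' h1 h2 ih =>
    by_cases h : j = i
    · subst h; rw [Cb_cons_eq] at hu; simp at hu
    · rw [Cb_cons_ne h] at hu
      have := supp_e' _ _ _ u hu
      rw [len_cons] at this ⊢; omega

noncomputable def Am {j : ι} (m : M j) : V M →ₗ[ℤ] V M :=
  Finsupp.lsum ℤ fun w => LinearMap.toSpanSingleton ℤ (V M) (Ab m w)

noncomputable def Cm {j : ι} (m : M j) : V M →ₗ[ℤ] V M :=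
  Finsupp.lsum ℤ fun w => LinearMap.toSpanSingleton ℤ (V M) (Cb m w)

theorem Am_single {j : ι} (m : M j) (w : Word M) (b : ℤ) :
    Am m (Finsupp.single w b) = b • Ab m w := by
  simp [Am, Finsupp.lsum_single, LinearMap.toSpanSingleton_apply]

theorem Cm_single {j : ι} (m : M j) (w : Word M) (b : ℤ) :
    Cm m (Finsupp.single w b) = b • Cb m w := by
  simp [Cm, Finsupp.lsum_single, LinearMap.toSpanSingleton_apply]

/-! ### filtering by length -/

theorem filter_eq_self_of {p : Word M → Prop} [DecidablePred p] (v : V M)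
    (h : ∀ u ∈ v.support, p u) :
    v.filter p = v := by
  classical
  ext u
  rw [Finsupp.filter_apply]
  split_ifs with hp
  · rfl
  · by_contra h0
    exact hp (h u (Finsupp.mem_support_iff.mpr (fun hh => h0 hh.symm)))

theorem filter_eq_zero_of {p : Word M → Prop} [DecidablePred p] (v : V M)
    (h : ∀ u ∈ v.support, ¬ p u) :
    v.filter p = 0 := by
  classical
  ext u
  rw [Finsupp.filter_apply]
  split_ifs with hp
  · by_contra h0
    exact h u (Finsupp.mem_support_iff.mpr h0) hp
  · rfl

theorem filter_smul' {p : Word M → Prop} [DecidablePred p] (b : ℤ) (v : V M) :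
    (b • v).filter p = b • v.filter p := by
  classical
  ext u
  rw [Finsupp.filter_apply, Finsupp.smul_apply, Finsupp.smul_apply, Finsupp.filter_apply]
  split_ifs
  · rfl
  · rw [smul_zero]

/-- the key exchange lemma for length-filtration -/
theorem filter_Lm {j : ι} (m : M j) (x : V M) (n : ℕ) :
    (Lm m x).filter (fun w => len w = n) =
      Am m (x.filter (fun w => len w = n)) + Cm m (x.filter (fun w => len w + 1 = n)) := by
  classical
  induction x using Finsupp.induction_linear with
  | zero => simp [Finsupp.filter_zero]
  | add f g hf hg =>
    rw [map_add, Finsupp.filter_add, hf, hg, Finsupp.filter_add, Finsupp.filter_add,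
      map_add, map_add]
    abel
  | single w b =>
    have hA : (Ab m w).filter (fun u => len u = n) = if len w = n then Ab m w else 0 := by
      split_ifs with h1
      · exact filter_eq_self_of _ (fun u hu => by show len u = n; rw [supp_Ab m w u hu]; exact h1)
      · exact filter_eq_zero_of _ (fun u hu => by show ¬ len u = n; rw [supp_Ab m w u hu]; exact h1)
    have hC : (Cb m w).filter (fun u => len u = n) = if len w + 1 = n then Cb m w else 0 := by
      split_ifs with h2
      · exact filter_eq_self_of _ (fun u hu => by show len u = n; rw [supp_Cb m w u hu]; exact h2)
      · exact filter_eq_zero_of _ (fun u hu => by show ¬ len u = n; rw [supp_Cb m w u hu]; exact h2)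
    have hs1 : (Finsupp.single w b).filter (fun u => len u = n) =
        if len w = n then Finsupp.single w b else 0 := by
      split_ifs with h1
      · exact Finsupp.filter_single_of_pos _ h1
      · exact Finsupp.filter_single_of_neg _ h1
    have hs2 : (Finsupp.single w b).filter (fun u => len u + 1 = n) =
        if len w + 1 = n then Finsupp.single w b else 0 := by
      split_ifs with h2
      · exact Finsupp.filter_single_of_pos _ h2
      · exact Finsupp.filter_single_of_neg _ h2
    rw [Lm_single, Finsupp.filter_smul, Lb_decomp, Finsupp.filter_add, hA, hC, hs1, hs2]
    split_ifs with h1 h2 h2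
    · omega
    all_goals simp [Am_single, Cm_single, smul_add]


/-! ### block projections -/

/-- `w` belongs to the `(j, t)` block: it is `x :: t` with `x` a nontrivial letter of `M j`. -/
def inBlock (j : ι) (t : List (Σ i, M i)) (w : Word M) : Prop :=
  ∃ (x : M j) (w' : Word M) (h1 : w'.fstIdx ≠ some j) (hx : x ≠ 1),
    w = Word.cons x w' h1 hx ∧ w'.toList = t

theorem head_eq_of_cons_eq {j : ι} {x y : M j} {w' w'' : Word M} {h1 h1' hx hy}
    (h : Word.cons x w' h1 hx = Word.cons y w'' h1' hy) : x = y ∧ w' = w'' := by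
  have hl : (⟨j, x⟩ : Σ i, M i) :: w'.toList = ⟨j, y⟩ :: w''.toList := by
    have := congrArg Word.toList h
    simpa [Word.cons] using this
  have h1 := (List.cons.injEq _ _ _ _ ▸ hl).1
  have h2 := (List.cons.injEq _ _ _ _ ▸ hl).2
  exact ⟨eq_of_heq (Sigma.mk.inj_iff.mp h1).2, Word.ext h2⟩

noncomputable def phiB (j : ι) (t : List (Σ i, M i)) (w : Word M) : M j →₀ ℤ :=
  if h : inBlock j t w then Finsupp.single h.choose 1 - Finsupp.single 1 1 else 0

theorem phiB_empty (j : ι) (t : List (Σ i, M i)) : phiB j t (Word.empty : Word M) = 0 := by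
  rw [phiB, dif_neg]
  rintro ⟨x, w', h1, hx, heq, ht⟩
  have := congrArg Word.toList heq
  simp [Word.empty, Word.cons] at this

theorem phiB_cons_self (j : ι) (t : List (Σ i, M i)) (x : M j) (w' : Word M)
    (h1 : w'.fstIdx ≠ some j) (hx : x ≠ 1) :
    phiB j t (Word.cons x w' h1 hx) =
      if w'.toList = t then Finsupp.single x 1 - Finsupp.single 1 1 else 0 := by
  by_cases ht : w'.toList = t
  · have hP : inBlock j t (Word.cons x w' h1 hx) := ⟨x, w', h1, hx, rfl, ht⟩
    rw [phiB, dif_pos hP, if_pos ht]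
    obtain ⟨w'', hh1, hh2, hh3, hh4⟩ := hP.choose_spec
    rw [(head_eq_of_cons_eq hh3.symm).1]
  · rw [phiB, dif_neg, if_neg ht]
    rintro ⟨y, w'', hh1, hh2, heq, ht'⟩
    exact ht ((head_eq_of_cons_eq heq).2 ▸ ht')

theorem phiB_cons_ne {i j : ι} (hij : i ≠ j) (t : List (Σ i, M i)) (x : M i) (w' : Word M)
    (h1 : w'.fstIdx ≠ some i) (hx : x ≠ 1) :
    phiB j t (Word.cons x w' h1 hx) = 0 := by
  rw [phiB, dif_neg]
  rintro ⟨y, w'', hh1, hh2, heq, ht'⟩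
  have := congrArg Word.toList heq
  simp only [Word.cons] at this
  have hd := (Sigma.mk.inj_iff.mp (List.cons.injEq _ _ _ _ ▸ this).1).1
  first
  | exact hij hd
  | exact hij hd.symm

noncomputable def phi (j : ι) (t : List (Σ i, M i)) : V M →ₗ[ℤ] (M j →₀ ℤ) :=
  Finsupp.lsum ℤ fun w => LinearMap.toSpanSingleton ℤ _ (phiB j t w)

theorem phi_single (j : ι) (t : List (Σ i, M i)) (w : Word M) (b : ℤ) :
    phi j t (Finsupp.single w b) = b • phiB j t w := by
  simp [phi, Finsupp.lsum_single, LinearMap.toSpanSingleton_apply]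

theorem phi_e (j : ι) (t : List (Σ i, M i)) (w : Word M) : phi j t (e w) = phiB j t w := by
  rw [e, phi_single, one_smul]

theorem phi_e'_self (j : ι) (t : List (Σ i, M i)) (x : M j) (w' : Word M)
    (h1 : w'.fstIdx ≠ some j) :
    phi j t (e' x w' h1) =
      if w'.toList = t then Finsupp.single x 1 - Finsupp.single 1 1 else 0 := by
  by_cases hx : x = 1
  · subst hx
    rw [e'_one, map_zero]
    split_ifs
    · rw [sub_self]
    · rfl
  · rw [e'_eq hx, phi_e, phiB_cons_self]

theorem phi_e'_ne {i j : ι} (hij : i ≠ j) (t : List (Σ i, M i)) (x : M i) (w' : Word M)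
    (h1 : w'.fstIdx ≠ some i) :
    phi j t (e' x w' h1) = 0 := by
  by_cases hx : x = 1
  · subst hx; rw [e'_one, map_zero]
  · rw [e'_eq hx, phi_e, phiB_cons_ne hij]

theorem phiB_apply_ne_one {j : ι} {m : M j} (hm : m ≠ 1) (t : List (Σ i, M i)) (w' : Word M) :
    phiB j t w' m = if w'.toList = ⟨j, m⟩ :: t then 1 else 0 := by
  induction w' using Word.consRecOn with
  | empty =>
    rw [phiB_empty, if_neg (by simp [Word.empty]), Finsupp.coe_zero, Pi.zero_apply]
  | cons i x w'' h1 h2 ih =>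
    by_cases hij : i = j
    · subst hij
      rw [phiB_cons_self]
      by_cases ht : w''.toList = t
      · rw [if_pos ht, Finsupp.sub_apply, Finsupp.single_apply, Finsupp.single_apply]
        by_cases hmm : x = m
        · subst hmm
          rw [if_pos rfl, if_neg (fun h => hm h.symm), sub_zero,
            if_pos (by simp [Word.cons, ht])]
        · rw [if_neg hmm, if_neg (fun h => hm h.symm), sub_zero, if_neg (fun hc => ?_)]
          have : (⟨i, x⟩ : Σ i, M i) :: w''.toList = ⟨i, m⟩ :: t := by
            simpa [Word.cons] using hc
          exact hmm (eq_of_heq (Sigma.mk.inj_iff.mp (List.cons.injEq _ _ _ _ ▸ this).1).2)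
      · rw [if_neg ht, if_neg (fun hc => ?_), Finsupp.coe_zero, Pi.zero_apply]
        have : (⟨i, x⟩ : Σ i, M i) :: w''.toList = ⟨i, m⟩ :: t := by
          simpa [Word.cons] using hc
        exact ht (List.cons.injEq _ _ _ _ ▸ this).2
    · rw [phiB_cons_ne hij, if_neg (fun hc => ?_), Finsupp.coe_zero, Pi.zero_apply]
      have : (⟨i, x⟩ : Σ i, M i) :: w''.toList = ⟨j, m⟩ :: t := by
        simpa [Word.cons] using hc
      exact hij (Sigma.mk.inj_iff.mp (List.cons.injEq _ _ _ _ ▸ this).1).1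

theorem phi_apply_eval {j : ι} {m : M j} (hm : m ≠ 1) (t : List (Σ i, M i)) (y : V M)
    (w : Word M) (hw : w.toList = ⟨j, m⟩ :: t) : phi j t y m = y w := by
  have hsum : phi j t y = y.sum fun w' b => b • phiB j t w' := by
    rw [phi, Finsupp.lsum_apply]
    apply Finsupp.sum_congr
    intro w' _
    rw [LinearMap.toSpanSingleton_apply]
  rw [hsum, Finsupp.sum_apply]
  have hcongr : (y.sum fun a b => (b • phiB j t a) m) =
      y.sum fun w' b => if w' = w then b else 0 := by
    apply Finsupp.sum_congr
    intro w' hw'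
    rw [Finsupp.smul_apply, phiB_apply_ne_one hm, smul_eq_mul]
    by_cases hh : w'.toList = ⟨j, m⟩ :: t
    · rw [if_pos hh, if_pos (Word.ext (by rw [hh, hw])), mul_one]
    · rw [if_neg hh, if_neg (fun hc => hh (by rw [hc, hw])), mul_zero]
  rw [hcongr]
  exact Finsupp.sum_ite_self_eq' y w

theorem exists_phi_ne (y : V M) (hy : y ≠ 0) :
    y Word.empty ≠ 0 ∨ ∃ j t, phi j t y ≠ 0 := by
  obtain ⟨w, hw⟩ := Finsupp.support_nonempty_iff.mpr hy
  have hw' : y w ≠ 0 := Finsupp.mem_support_iff.mp hw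
  induction w using Word.consRecOn with
  | empty => exact Or.inl hw'
  | cons i x w' h1 h2 ih =>
    refine Or.inr ⟨i, w'.toList, fun h0 => ?_⟩
    have := phi_apply_eval h2 w'.toList y (Word.cons x w' h1 h2) rfl
    rw [h0] at this
    exact hw' (by simpa using this.symm)


/-! ### interaction of `Am` with block projections -/

theorem mapDomain_sub {α β : Type*} (f : α → β) (x y : α →₀ ℤ) :
    Finsupp.mapDomain f (x - y) = Finsupp.mapDomain f x - Finsupp.mapDomain f y :=
  map_sub (Finsupp.mapDomain.addMonoidHom f) x y

theorem phi_Ab_self {j : ι} (t : List (Σ i, M i)) (m : M j) (w : Word M) :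
    phi j t (Ab m w) = Finsupp.mapDomain (fun z => m * z) (phiB j t w) := by
  induction w using Word.consRecOn with
  | empty => rw [Ab_empty, phi_e, phiB_empty, Finsupp.mapDomain_zero]
  | cons i x w' h1 h2 ih =>
    by_cases h : j = i
    · subst h
      rw [Ab_cons_eq, map_sub, phi_e'_self, phi_e'_self, phiB_cons_self]
      by_cases ht : w'.toList = t
      · rw [if_pos ht, if_pos ht, if_pos ht, mapDomain_sub, Finsupp.mapDomain_single,
          Finsupp.mapDomain_single, mul_one]
        abel
      · rw [if_neg ht, if_neg ht, if_neg ht, Finsupp.mapDomain_zero, sub_zero]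
    · have hij : i ≠ j := fun hh => h hh.symm
      rw [Ab_cons_ne h, phi_e, phiB_cons_ne hij, Finsupp.mapDomain_zero]

theorem phi_Am_self {j : ι} (t : List (Σ i, M i)) (m : M j) (y : V M) :
    phi j t (Am m y) = Finsupp.mapDomain (fun z => m * z) (phi j t y) := by
  induction y using Finsupp.induction_linear with
  | zero => simp
  | add f g hf hg => rw [map_add, map_add, hf, hg, map_add, Finsupp.mapDomain_add]
  | single w b =>
    rw [Am_single, map_smul, phi_single, Finsupp.mapDomain_smul, phi_Ab_self]

theorem phi_Ab_ne {j j' : ι} (hjj : j' ≠ j) (t : List (Σ i, M i)) (m : M j) (w : Word M) :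
    phi j' t (Ab m w) = phiB j' t w := by
  induction w using Word.consRecOn with
  | empty => rw [Ab_empty, phi_e]
  | cons i x w' h1 h2 ih =>
    by_cases h : j = i
    · subst h
      rw [Ab_cons_eq, map_sub, phi_e'_ne (fun hh => hjj hh.symm), phi_e'_ne (fun hh => hjj hh.symm),
        phiB_cons_ne (fun hh => hjj hh.symm), sub_zero]
    · rw [Ab_cons_ne h, phi_e]

theorem phi_Am_ne {j j' : ι} (hjj : j' ≠ j) (t : List (Σ i, M i)) (m : M j) (y : V M) :
    phi j' t (Am m y) = phi j' t y := by
  induction y using Finsupp.induction_linear with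
  | zero => rw [map_zero, map_zero]
  | add f g hf hg => rw [map_add, map_add, hf, hg, map_add]
  | single w b => rw [Am_single, map_smul, phi_Ab_ne hjj, phi_single]

theorem e'_apply_empty {j : ι} (x : M j) (t : Word M) (ht : t.fstIdx ≠ some j) :
    (e' x t ht) Word.empty = 0 := by
  by_cases hx : x = 1
  · subst hx; rw [e'_one]; rfl
  · rw [e'_eq hx, e, Finsupp.single_apply, if_neg]
    intro hc
    have := congrArg Word.toList hc
    simp [Word.cons, Word.empty] at this

theorem Ab_apply_empty {j : ι} (m : M j) (w : Word M) :
    (Ab m w) Word.empty = (Finsupp.single w (1 : ℤ)) Word.empty := by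
  induction w using Word.consRecOn with
  | empty => rfl
  | cons i x w' h1 h2 ih =>
    by_cases h : j = i
    · subst h
      rw [Ab_cons_eq, Finsupp.sub_apply, e'_apply_empty, e'_apply_empty, sub_zero,
        Finsupp.single_apply, if_neg]
      intro hc
      have := congrArg Word.toList hc
      simp [Word.cons, Word.empty] at this
    · rw [Ab_cons_ne h]
      rfl

theorem Am_apply_empty {j : ι} (m : M j) (y : V M) :
    (Am m y) Word.empty = y Word.empty := by
  induction y using Finsupp.induction_linear with
  | zero => rw [map_zero]
  | add f g hf hg => rw [map_add, Finsupp.add_apply, hf, hg, Finsupp.add_apply]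
  | single w b =>
    rw [Am_single, Finsupp.smul_apply, Ab_apply_empty, Finsupp.single_apply, Finsupp.single_apply]
    split_ifs
    · rw [smul_eq_mul, mul_one]
    · rw [smul_eq_mul, mul_zero]

theorem Am_ne_zero {j : ι} (m : M j) (y : V M) (hy : y ≠ 0) : Am m y ≠ 0 := by
  intro h0
  rcases exists_phi_ne y hy with hne | ⟨j', t, hne⟩
  · rw [← Am_apply_empty m y, h0] at hne
    exact hne rfl
  · by_cases hj : j' = j
    · subst hj
      have := phi_Am_self t m y
      rw [h0, map_zero] at this
      have hinj := Finsupp.mapDomain_injective (M := ℤ) (mul_right_injective m)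
      exact hne (hinj (by rw [← this, Finsupp.mapDomain_zero]))
    · have := phi_Am_ne hj t m y
      rw [h0, map_zero] at this
      exact hne this.symm


/-! ### the order machinery -/

theorem finset_max {α : Type*} (r : α → α → Prop) (htot : ∀ a b, r a b ∨ r b a)
    (htrans : ∀ a b c, r a b → r b c → r a c) (s : Finset α) (hs : s.Nonempty) :
    ∃ a ∈ s, ∀ b ∈ s, r b a := by
  classical
  induction s using Finset.cons_induction with
  | empty => exact absurd hs (by simp)
  | cons a s hna ih =>
    rcases s.eq_empty_or_nonempty with rfl | hsne
    · refine ⟨a, Finset.mem_cons_self a _, ?_⟩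
      intro b hb
      rcases Finset.mem_cons.mp hb with rfl | hb
      · rcases htot b b with h | h <;> exact h
      · simp at hb
    · obtain ⟨b, hb, hmax⟩ := ih hsne
      rcases htot a b with h | h
      · refine ⟨b, Finset.mem_cons_of_mem hb, ?_⟩
        intro c hc
        rcases Finset.mem_cons.mp hc with rfl | hc
        · exact h
        · exact hmax c hc
      · refine ⟨a, Finset.mem_cons_self a _, ?_⟩
        intro c hc
        rcases Finset.mem_cons.mp hc with rfl | hc
        · rcases htot c c with hh | hh <;> exact hh
        · exact htrans c b a (hmax c hc) h

/-- reflexivisation of the well-ordering relation on blocks -/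
def rB {α : Type*} (a b : α) : Prop := WellOrderingRel a b ∨ a = b

theorem rB_total {α : Type*} (a b : α) : rB a b ∨ rB b a := by
  rcases trichotomous_of WellOrderingRel a b with h | h | h
  · exact Or.inl (Or.inl h)
  · exact Or.inl (Or.inr h)
  · exact Or.inr (Or.inl h)

theorem rB_trans {α : Type*} (a b c : α) : rB a b → rB b c → rB a c := by
  rintro (h1 | rfl) (h2 | rfl)
  · exact Or.inl (_root_.trans h1 h2)
  · exact Or.inl h1
  · exact Or.inl h2
  · exact Or.inr rfl

theorem rB_antisymm {α : Type*} (a b : α) : rB a b → rB b a → a = b := by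
  have hirr : ∀ x : α, ¬ WellOrderingRel x x :=
    fun x => (WellOrderingRel.isWellOrder.wf (α := α)).isIrrefl.irrefl x
  rintro (h1 | rfl) (h2 | h2)
  · exact absurd (_root_.trans h1 h2) (hirr a)
  · exact h2.symm
  · rfl
  · rfl

section Order

variable (rr : ∀ i, M i → M i → Prop)

/-- positivity of an element of the group ring coefficient module of `M j`:
the coefficient at the `rr j`-largest support element is positive. -/
def PosI (j : ι) (ψ : M j →₀ ℤ) : Prop :=
  ∃ m, 0 < ψ m ∧ ∀ m' ∈ ψ.support, rr j m' m

theorem posI_total (hlin : ∀ i, IsLinearOrder (M i) (rr i)) {j : ι} (ψ : M j →₀ ℤ) (hψ : ψ ≠ 0) :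
    PosI rr j ψ ∨ PosI rr j (-ψ) := by
  obtain ⟨m, hm, hmax⟩ := finset_max (rr j) (fun a b => (hlin j).total a b)
    (fun a b c h1 h2 => (hlin j).trans a b c h1 h2) ψ.support
    (Finsupp.support_nonempty_iff.mpr hψ)
  have hne : ψ m ≠ 0 := Finsupp.mem_support_iff.mp hm
  rcases lt_or_gt_of_ne hne with h | h
  · right
    refine ⟨m, by simp [h], ?_⟩
    intro m' hm'
    rw [Finsupp.support_neg] at hm'
    exact hmax m' hm'
  · exact Or.inl ⟨m, h, hmax⟩

theorem posI_neg_false (hlin : ∀ i, IsLinearOrder (M i) (rr i)) {j : ι} (ψ : M j →₀ ℤ)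
    (h1 : PosI rr j ψ) (h2 : PosI rr j (-ψ)) :
    False := by
  obtain ⟨m1, hm1, hmax1⟩ := h1
  obtain ⟨m2, hm2, hmax2⟩ := h2
  have hs1 : m1 ∈ ψ.support := Finsupp.mem_support_iff.mpr (by omega)
  have hs2 : m2 ∈ ψ.support := by
    rw [← Finsupp.support_neg]
    apply Finsupp.mem_support_iff.mpr
    intro h0
    rw [h0] at hm2
    exact lt_irrefl 0 hm2
  have h12 := hmax2 m1 (by rwa [Finsupp.support_neg])
  have h21 := hmax1 m2 hs2
  have : m1 = m2 := (hlin j).antisymm _ _ h12 h21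
  subst this
  rw [Finsupp.neg_apply] at hm2
  omega

theorem posI_add (hlin : ∀ i, IsLinearOrder (M i) (rr i)) {j : ι} (ψ χ : M j →₀ ℤ)
    (h1 : PosI rr j ψ) (h2 : PosI rr j χ) :
    PosI rr j (ψ + χ) := by
  obtain ⟨m1, hm1, hmax1⟩ := h1
  obtain ⟨m2, hm2, hmax2⟩ := h2
  have hsupp : ∀ m' ∈ (ψ + χ).support, m' ∈ ψ.support ∨ m' ∈ χ.support := by
    intro m' hm'
    by_contra hc
    push_neg at hc
    have e1 : ψ m' = 0 := Finsupp.notMem_support_iff.mp hc.1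
    have e2 : χ m' = 0 := Finsupp.notMem_support_iff.mp hc.2
    have := Finsupp.mem_support_iff.mp hm'
    rw [Finsupp.add_apply, e1, e2] at this
    omega
  rcases (hlin j).total m1 m2 with hc | hc
  · by_cases hmem : m2 ∈ ψ.support
    · have h21 := hmax1 m2 hmem
      have : m1 = m2 := (hlin j).antisymm _ _ hc h21
      subst this
      refine ⟨m1, by rw [Finsupp.add_apply]; omega, ?_⟩
      intro m' hm'
      rcases hsupp m' hm' with h | h
      · exact hmax1 m' h
      · exact hmax2 m' h
    · have e1 : ψ m2 = 0 := Finsupp.notMem_support_iff.mp hmem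
      refine ⟨m2, by rw [Finsupp.add_apply, e1]; omega, ?_⟩
      intro m' hm'
      rcases hsupp m' hm' with h | h
      · exact (hlin j).trans _ _ _ (hmax1 m' h) hc
      · exact hmax2 m' h
  · by_cases hmem : m1 ∈ χ.support
    · have h12 := hmax2 m1 hmem
      have : m2 = m1 := (hlin j).antisymm _ _ hc h12
      subst this
      refine ⟨m2, by rw [Finsupp.add_apply]; omega, ?_⟩
      intro m' hm'
      rcases hsupp m' hm' with h | h
      · exact hmax1 m' h
      · exact hmax2 m' h
    · have e1 : χ m1 = 0 := Finsupp.notMem_support_iff.mp hmem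
      refine ⟨m1, by rw [Finsupp.add_apply, e1]; omega, ?_⟩
      intro m' hm'
      rcases hsupp m' hm' with h | h
      · exact hmax1 m' h
      · exact (hlin j).trans _ _ _ (hmax2 m' h) hc

theorem posI_shift (hinv : ∀ i, ∀ x y z : M i, rr i x y → rr i (z * x) (z * y))
    {j : ι} (m : M j) (ψ : M j →₀ ℤ) (h : PosI rr j ψ) :
    PosI rr j (Finsupp.mapDomain (fun z => m * z) ψ) := by
  obtain ⟨m1, hm1, hmax1⟩ := h
  refine ⟨m * m1, ?_, ?_⟩
  · rwa [Finsupp.mapDomain_apply (mul_right_injective m)]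
  · intro m' hm'
    classical
    have := Finsupp.mapDomain_support (f := fun z => m * z) hm'
    rcases Finset.mem_image.mp this with ⟨m'', hm'', rfl⟩
    exact hinv j _ _ m (hmax1 m'' hm'')

end Order

/-! ### lowest homogeneous part -/

noncomputable def n0 (x : V M) : ℕ :=
  if h : x = 0 then 0 else
    (x.support.image len).min' (by
      obtain ⟨w, hw⟩ := Finsupp.support_nonempty_iff.mpr h
      exact ⟨len w, Finset.mem_image_of_mem _ hw⟩)

theorem n0_le {x : V M} (hx : x ≠ 0) : ∀ w ∈ x.support, n0 x ≤ len w := by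
  intro w hw
  rw [n0, dif_neg hx]
  exact Finset.min'_le _ _ (Finset.mem_image_of_mem _ hw)

theorem n0_mem {x : V M} (hx : x ≠ 0) : ∃ w ∈ x.support, len w = n0 x := by
  rw [n0, dif_neg hx]
  obtain ⟨w, hw, hl⟩ := Finset.mem_image.mp (Finset.min'_mem (x.support.image len) _)
  exact ⟨w, hw, hl⟩

theorem n0_neg (x : V M) : n0 (-x) = n0 x := by
  by_cases h : x = 0
  · rw [h, neg_zero]
  · rw [n0, n0, dif_neg h, dif_neg (neg_ne_zero.mpr h)]
    congr 1
    rw [Finsupp.support_neg]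

noncomputable def low (x : V M) : V M := x.filter (fun w => len w = n0 x)

theorem low_apply (x : V M) (w : Word M) :
    low x w = if len w = n0 x then x w else 0 := rfl

theorem low_ne_zero {x : V M} (hx : x ≠ 0) : low x ≠ 0 := by
  obtain ⟨w, hw, hl⟩ := n0_mem hx
  intro h0
  have : low x w = 0 := by rw [h0]; rfl
  rw [low_apply, if_pos hl] at this
  exact Finsupp.mem_support_iff.mp hw this

theorem low_hom (x : V M) : ∀ w ∈ (low x).support, len w = n0 x := by
  intro w hw
  have := Finsupp.mem_support_iff.mp hw
  rw [low_apply] at this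
  by_contra hc
  rw [if_neg hc] at this
  exact this rfl

theorem low_neg (x : V M) : low (-x) = - low x := by
  ext w
  rw [Finsupp.neg_apply, low_apply, low_apply, n0_neg, Finsupp.neg_apply]
  split_ifs
  · rfl
  · rw [neg_zero]

/-! ### the positivity predicate -/

section Order2

variable (rr : ∀ i, M i → M i → Prop)

/-- positivity of a homogeneous element -/
def PosLow (y : V M) : Prop :=
  (0 < y Word.empty) ∨
  ∃ (j : ι) (t : List (Σ i, M i)), phi j t y ≠ 0 ∧
    (∀ (j' : ι) (t' : List (Σ i, M i)), phi j' t' y ≠ 0 →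
      rB (α := Option (ι × List (Σ i, M i))) (some (j', t')) (some (j, t))) ∧
    PosI rr j (phi j t y)

/-- the global positivity predicate -/
def Pos (x : V M) : Prop := x ≠ 0 ∧ PosLow rr (low x)

theorem phi_eq_sum (j : ι) (t : List (Σ i, M i)) (y : V M) :
    phi j t y = y.sum fun w b => b • phiB j t w := by
  rw [phi, Finsupp.lsum_apply]
  apply Finsupp.sum_congr
  intro w' _
  rw [LinearMap.toSpanSingleton_apply]

theorem block_of_phi_ne {j : ι} {t : List (Σ i, M i)} {y : V M} (h : phi j t y ≠ 0) :
    ∃ w ∈ y.support, inBlock j t w := by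
  by_contra hc
  push_neg at hc
  apply h
  rw [phi_eq_sum, Finsupp.sum]
  apply Finset.sum_eq_zero
  intro w hw
  rw [phiB, dif_neg (hc w hw), smul_zero]

theorem len_of_inBlock {j : ι} {t : List (Σ i, M i)} {w : Word M} (h : inBlock j t w) :
    len w = t.length + 1 := by
  obtain ⟨x, w', h1, hx, rfl, ht⟩ := h
  rw [len_cons]
  have : len w' = t.length := by rw [len, ht]
  omega

/-- the block map -/
def blk (w : Word M) : Option (ι × List (Σ i, M i)) :=
  w.toList.casesOn none (fun a t => some (a.1, t))

theorem blk_empty : blk (Word.empty : Word M) = none := rfl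

theorem blk_cons {i : ι} (x : M i) (w' : Word M) (h1 : w'.fstIdx ≠ some i) (hx : x ≠ 1) :
    blk (Word.cons x w' h1 hx) = some (i, w'.toList) := rfl

theorem blk_of_inBlock {j : ι} {t : List (Σ i, M i)} {w : Word M} (h : inBlock j t w) :
    blk w = some (j, t) := by
  obtain ⟨x, w', h1, hx, rfl, ht⟩ := h
  rw [blk_cons, ht]

theorem phi_ne_of_blk {j : ι} {t : List (Σ i, M i)} {y : V M} {w : Word M}
    (hw : w ∈ y.support) (hb : blk w = some (j, t)) : phi j t y ≠ 0 := by
  induction w using Word.consRecOn with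
  | empty => simp [blk_empty] at hb
  | cons i x w' h1 h2 ih =>
    rw [blk_cons] at hb
    have hji : i = j := (Prod.mk.injEq _ _ _ _ ▸ Option.some_inj.mp hb).1
    subst hji
    have hti : w'.toList = t := (Prod.mk.injEq _ _ _ _ ▸ Option.some_inj.mp hb).2
    subst hti
    intro h0
    have := phi_apply_eval h2 w'.toList y (Word.cons x w' h1 h2) rfl
    rw [h0] at this
    exact Finsupp.mem_support_iff.mp hw (by simpa using this.symm)

theorem poslow_total (hlin : ∀ i, IsLinearOrder (M i) (rr i)) {y : V M} (hy : y ≠ 0) :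
    PosLow rr y ∨ PosLow rr (-y) := by
  classical
  by_cases h0 : y Word.empty ≠ 0
  · rcases lt_or_gt_of_ne h0 with h | h
    · right; left; rw [Finsupp.neg_apply]; omega
    · left; left; exact h
  · push_neg at h0
    rcases exists_phi_ne y hy with hne | ⟨j0, t0, hne⟩
    · exact absurd h0 hne
    · obtain ⟨w0, hw0, hblk0⟩ := block_of_phi_ne hne
      set S := (y.support.image blk).filter (fun o => o.isSome) with hS
      have hSne : S.Nonempty := by
        refine ⟨some (j0, t0), Finset.mem_filter.mpr ⟨?_, rfl⟩⟩
        rw [← blk_of_inBlock hblk0]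
        exact Finset.mem_image_of_mem _ hw0
      obtain ⟨o, hoS, homax⟩ := finset_max rB rB_total rB_trans S hSne
      have hosome := (Finset.mem_filter.mp hoS).2
      obtain ⟨⟨j, t⟩, rfl⟩ := Option.isSome_iff_exists.mp hosome
      have himg := (Finset.mem_filter.mp hoS).1
      obtain ⟨w, hw, hblkw⟩ := Finset.mem_image.mp himg
      have hphine : phi j t y ≠ 0 := phi_ne_of_blk hw hblkw
      have hbound : ∀ (j' : ι) (t' : List (Σ i, M i)), phi j' t' y ≠ 0 →
          rB (α := Option (ι × List (Σ i, M i))) (some (j', t')) (some (j, t)) := by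
        intro j' t' hne'
        obtain ⟨w', hw', hblk'⟩ := block_of_phi_ne hne'
        apply homax
        refine Finset.mem_filter.mpr ⟨?_, ?_⟩
        · rw [← blk_of_inBlock hblk']
          exact Finset.mem_image_of_mem _ hw'
        · rfl
      rcases posI_total rr hlin (phi j t y) hphine with hp | hp
      · exact Or.inl (Or.inr ⟨j, t, hphine, hbound, hp⟩)
      · right
        right
        refine ⟨j, t, ?_, ?_, ?_⟩
        · rw [map_neg]
          exact neg_ne_zero.mpr hphine
        · intro j' t' hne'
          apply hbound
          intro hz
          rw [map_neg, hz, neg_zero] at hne'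
          exact hne' rfl
        · rw [map_neg]
          exact hp

theorem poslow_neg_false (hlin : ∀ i, IsLinearOrder (M i) (rr i)) {y : V M} {n : ℕ}
    (hhom : ∀ w ∈ y.support, len w = n) (h1 : PosLow rr y) (h2 : PosLow rr (-y)) : False := by
  have hmixed : ∀ z : V M, (∀ w ∈ z.support, len w = n) → 0 < z Word.empty →
      ∀ (j : ι) (t : List (Σ i, M i)), phi j t z ≠ 0 → False := by
    intro z hz hpos j t hne
    obtain ⟨w, hw, hblk⟩ := block_of_phi_ne hne
    have hn1 := len_of_inBlock hblk
    have hn2 := hz w hw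
    have hn3 : len (Word.empty : Word M) = n :=
      hz _ (Finsupp.mem_support_iff.mpr (by omega))
    rw [len_empty] at hn3
    omega
  have hhomneg : ∀ w ∈ (-y).support, len w = n := by
    intro w hw
    rw [Finsupp.support_neg] at hw
    exact hhom w hw
  rcases h1 with h1 | ⟨j1, t1, hne1, hmax1, hpos1⟩
  · rcases h2 with h2 | ⟨j2, t2, hne2, hmax2, hpos2⟩
    · rw [Finsupp.neg_apply] at h2; omega
    · have hne2' : phi j2 t2 y ≠ 0 := by
        intro hz
        rw [map_neg, hz, neg_zero] at hne2
        exact hne2 rfl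
      exact hmixed y hhom h1 j2 t2 hne2'
  · rcases h2 with h2 | ⟨j2, t2, hne2, hmax2, hpos2⟩
    · have hne1' : phi j1 t1 (-y) ≠ 0 := by
        rw [map_neg]
        exact neg_ne_zero.mpr hne1
      exact hmixed (-y) hhomneg h2 j1 t1 hne1'
    · have hne2' : phi j2 t2 y ≠ 0 := by
        intro hz
        rw [map_neg, hz, neg_zero] at hne2
        exact hne2 rfl
      have hne1' : phi j1 t1 (-y) ≠ 0 := by
        rw [map_neg]
        exact neg_ne_zero.mpr hne1
      have hb1 := hmax1 j2 t2 hne2'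
      have hb2 := hmax2 j1 t1 hne1'
      have heq := rB_antisymm _ _ hb1 hb2
      have hj : j2 = j1 := (Prod.mk.injEq _ _ _ _ ▸ Option.some_inj.mp heq).1
      subst hj
      have ht : t2 = t1 := (Prod.mk.injEq _ _ _ _ ▸ Option.some_inj.mp heq).2
      subst ht
      rw [map_neg] at hpos2
      exact posI_neg_false rr hlin _ hpos1 hpos2

theorem posI_ne_zero {j : ι} {ψ : M j →₀ ℤ} (h : PosI rr j ψ) : ψ ≠ 0 := by
  obtain ⟨m, hm, _⟩ := h
  intro h0
  rw [h0] at hm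
  exact lt_irrefl 0 (by simpa using hm)

theorem poslow_add (hlin : ∀ i, IsLinearOrder (M i) (rr i)) {u v : V M} {n : ℕ}
    (hhu : ∀ w ∈ u.support, len w = n) (hhv : ∀ w ∈ v.support, len w = n)
    (h1 : PosLow rr u) (h2 : PosLow rr v) : PosLow rr (u + v) := by
  have hmixed : ∀ z z' : V M, (∀ w ∈ z.support, len w = n) → (∀ w ∈ z'.support, len w = n) →
      0 < z Word.empty → ∀ (j : ι) (t : List (Σ i, M i)), phi j t z' ≠ 0 → False := by
    intro z z' hz hz' hpos j t hne
    obtain ⟨w, hw, hblk⟩ := block_of_phi_ne hne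
    have hn1 := len_of_inBlock hblk
    have hn2 := hz' w hw
    have hn3 : len (Word.empty : Word M) = n :=
      hz _ (Finsupp.mem_support_iff.mpr (by omega))
    rw [len_empty] at hn3
    omega
  rcases h1 with h1 | ⟨j1, t1, hne1, hmax1, hpos1⟩
  · rcases h2 with h2 | ⟨j2, t2, hne2, hmax2, hpos2⟩
    · left
      rw [Finsupp.add_apply]
      omega
    · exact absurd (hmixed u v hhu hhv h1 j2 t2 hne2) not_false
  · rcases h2 with h2 | ⟨j2, t2, hne2, hmax2, hpos2⟩
    · exact absurd (hmixed v u hhv hhu h2 j1 t1 hne1) not_false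
    · -- both blocks
      have hsplit : ∀ (j' : ι) (t' : List (Σ i, M i)), phi j' t' (u + v) ≠ 0 →
          phi j' t' u ≠ 0 ∨ phi j' t' v ≠ 0 := by
        intro j' t' hne'
        by_contra hc
        push_neg at hc
        rw [map_add, hc.1, hc.2, add_zero] at hne'
        exact hne' rfl
      by_cases heq : (j1, t1) = (j2, t2)
      · have hj : j1 = j2 := (Prod.mk.injEq _ _ _ _ ▸ heq).1
        subst hj
        have ht : t1 = t2 := (Prod.mk.injEq _ _ _ _ ▸ heq).2
        subst ht
        have hsum : PosI rr j1 (phi j1 t1 (u + v)) := by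
          rw [map_add]
          exact posI_add rr hlin _ _ hpos1 hpos2
        refine Or.inr ⟨j1, t1, posI_ne_zero rr hsum, ?_, hsum⟩
        intro j' t' hne'
        rcases hsplit j' t' hne' with h | h
        · exact hmax1 j' t' h
        · exact hmax2 j' t' h
      · rcases rB_total (α := Option (ι × List (Σ i, M i))) (some (j1, t1)) (some (j2, t2))
          with h12 | h21
        · -- max is (j2, t2); phi j2 t2 u must vanish
          have hzu : phi j2 t2 u = 0 := by
            by_contra hzu
            have h' := rB_antisymm _ _ h12 (hmax1 j2 t2 hzu)
            exact heq (Option.some_inj.mp h')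
          have hphisum : phi j2 t2 (u + v) = phi j2 t2 v := by
            rw [map_add, hzu, zero_add]
          refine Or.inr ⟨j2, t2, by rw [hphisum]; exact posI_ne_zero rr hpos2, ?_, ?_⟩
          · intro j' t' hne'
            rcases hsplit j' t' hne' with h | h
            · exact rB_trans _ _ _ (hmax1 j' t' h) h12
            · exact hmax2 j' t' h
          · rw [hphisum]
            exact hpos2
        · -- max is (j1, t1); phi j1 t1 v must vanish
          have hzv : phi j1 t1 v = 0 := by
            by_contra hzv
            have h' := rB_antisymm _ _ h21 (hmax2 j1 t1 hzv)
            exact heq (Option.some_inj.mp h').symm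
          have hphisum : phi j1 t1 (u + v) = phi j1 t1 u := by
            rw [map_add, hzv, add_zero]
          refine Or.inr ⟨j1, t1, by rw [hphisum]; exact posI_ne_zero rr hpos1, ?_, ?_⟩
          · intro j' t' hne'
            rcases hsplit j' t' hne' with h | h
            · exact hmax1 j' t' h
            · exact rB_trans _ _ _ (hmax2 j' t' h) h21
          · rw [hphisum]
            exact hpos1


/-! ### positivity at the level of `Pos` -/

theorem pos_total (hlin : ∀ i, IsLinearOrder (M i) (rr i)) {x : V M} (hx : x ≠ 0) :
    Pos rr x ∨ Pos rr (-x) := by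
  rcases poslow_total rr hlin (low_ne_zero hx) with h | h
  · exact Or.inl ⟨hx, h⟩
  · right
    refine ⟨neg_ne_zero.mpr hx, ?_⟩
    rw [low_neg]
    exact h

theorem pos_neg_false (hlin : ∀ i, IsLinearOrder (M i) (rr i)) {x : V M}
    (h1 : Pos rr x) (h2 : Pos rr (-x)) : False := by
  obtain ⟨hx, hp1⟩ := h1
  obtain ⟨hx', hp2⟩ := h2
  rw [low_neg] at hp2
  exact poslow_neg_false rr hlin (low_hom x) hp1 hp2

theorem mem_support_filter {p : Word M → Prop} [DecidablePred p] {v : V M} {u : Word M}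
    (h : u ∈ (v.filter p).support) : p u ∧ u ∈ v.support := by
  have hne := Finsupp.mem_support_iff.mp h
  rw [Finsupp.filter_apply] at hne
  by_cases hp : p u
  · rw [if_pos hp] at hne
    exact ⟨hp, Finsupp.mem_support_iff.mpr hne⟩
  · rw [if_neg hp] at hne
    exact absurd rfl hne

theorem pos_add_of_high (hlin : ∀ i, IsLinearOrder (M i) (rr i)) {x y : V M}
    (hx : Pos rr x) (hy : ∀ u ∈ y.support, n0 x < len u) : Pos rr (x + y) := by
  obtain ⟨hx0, hplow⟩ := hx
  obtain ⟨w, hw, hlw⟩ := n0_mem hx0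
  have hyw : y w = 0 := by
    by_contra hc
    have := hy w (Finsupp.mem_support_iff.mpr hc)
    omega
  have hsw : (x + y) w ≠ 0 := by
    rw [Finsupp.add_apply, hyw, add_zero]
    exact Finsupp.mem_support_iff.mp hw
  have hne : x + y ≠ 0 := fun h0 => hsw (by rw [h0]; rfl)
  have hn0 : n0 (x + y) = n0 x := by
    have hle : n0 (x + y) ≤ n0 x := by
      have := n0_le hne w (Finsupp.mem_support_iff.mpr hsw)
      omega
    have hge : n0 x ≤ n0 (x + y) := by
      obtain ⟨u, hu, hlu⟩ := n0_mem hne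
      have := Finset.mem_union.mp (Finsupp.support_add hu)
      rcases this with h | h
      · have := n0_le hx0 u h
        omega
      · have := hy u h
        omega
    omega
  have hlow : low (x + y) = low x := by
    ext u
    rw [low_apply, low_apply, hn0, Finsupp.add_apply]
    split_ifs with hc
    · have hyu : y u = 0 := by
        by_contra hc'
        have := hy u (Finsupp.mem_support_iff.mpr hc')
        omega
      rw [hyu, add_zero]
    · rfl
  exact ⟨hne, by rw [hlow]; exact hplow⟩

theorem pos_add (hlin : ∀ i, IsLinearOrder (M i) (rr i)) {x y : V M}
    (hx : Pos rr x) (hy : Pos rr y) : Pos rr (x + y) := by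
  rcases lt_trichotomy (n0 x) (n0 y) with hlt | heq | hgt
  · exact pos_add_of_high rr hlin hx
      (fun u hu => lt_of_lt_of_le hlt (n0_le hy.1 u hu))
  · -- equal lowest degrees
    by_cases hc : low x + low y = 0
    · exfalso
      have : low y = - low x := by rw [eq_neg_iff_add_eq_zero, add_comm]; exact hc
      apply poslow_neg_false rr hlin (low_hom x) hx.2
      rw [← this]
      have h2 := hy.2
      have : ∀ w ∈ (low y).support, len w = n0 x := by
        intro w hw
        rw [heq]
        exact low_hom y w hw
      exact hy.2
    · have hsum : ∀ u, (low x + low y) u ≠ 0 → (x + y) u ≠ 0 ∧ len u = n0 x := by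
        intro u hu
        have hlen : len u = n0 x := by
          by_contra hlc
          have h1 : low x u = 0 := by rw [low_apply, if_neg hlc]
          have h2 : low y u = 0 := by rw [low_apply, if_neg (heq ▸ hlc)]
          rw [Finsupp.add_apply, h1, h2] at hu
          exact hu rfl
        constructor
        · rw [Finsupp.add_apply, low_apply, low_apply, if_pos hlen, if_pos (heq ▸ hlen)] at hu
          rw [Finsupp.add_apply]
          exact hu
        · exact hlen
      obtain ⟨u0, hu0⟩ := Finsupp.support_nonempty_iff.mpr hc
      have hu0' := hsum u0 (Finsupp.mem_support_iff.mp hu0)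
      have hne : x + y ≠ 0 := fun h0 => hu0'.1 (by rw [h0]; rfl)
      have hn0 : n0 (x + y) = n0 x := by
        have hle : n0 (x + y) ≤ n0 x := by
          have := n0_le hne u0 (Finsupp.mem_support_iff.mpr hu0'.1)
          omega
        have hge : n0 x ≤ n0 (x + y) := by
          obtain ⟨u, hu, hlu⟩ := n0_mem hne
          rcases Finset.mem_union.mp (Finsupp.support_add hu) with h | h
          · have := n0_le hx.1 u h
            omega
          · have := n0_le hy.1 u h
            omega
        omega
      have hlow : low (x + y) = low x + low y := by
        ext u
        rw [low_apply, hn0, Finsupp.add_apply, Finsupp.add_apply, low_apply, low_apply, heq]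
        split_ifs with hcc
        · rfl
        · rw [add_zero]
      refine ⟨hne, ?_⟩
      rw [hlow]
      exact poslow_add rr hlin (low_hom x) (fun w hw => heq ▸ low_hom y w hw) hx.2 hy.2
  · rw [add_comm]
    exact pos_add_of_high rr hlin hy
      (fun u hu => lt_of_lt_of_le hgt (n0_le hx.1 u hu))

/-! ### invariance of positivity under the action -/

theorem phi_Am_eq_zero_iff {j j' : ι} (m : M j) (t : List (Σ i, M i)) (y : V M) :
    phi j' t (Am m y) = 0 ↔ phi j' t y = 0 := by
  by_cases h : j' = j
  · subst h
    rw [phi_Am_self]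
    constructor
    · intro h0
      apply Finsupp.mapDomain_injective (M := ℤ) (mul_right_injective m)
      rw [h0, Finsupp.mapDomain_zero]
    · intro h0
      rw [h0, Finsupp.mapDomain_zero]
  · rw [phi_Am_ne h]

theorem poslow_Am (hinv : ∀ i, ∀ x y z : M i, rr i x y → rr i (z * x) (z * y))
    {j : ι} (m : M j) {y : V M} (hy : PosLow rr y) : PosLow rr (Am m y) := by
  rcases hy with h | ⟨j1, t1, hne, hmax, hpos⟩
  · left
    rw [Am_apply_empty]
    exact h
  · right
    refine ⟨j1, t1, ?_, ?_, ?_⟩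
    · intro h0
      exact hne ((phi_Am_eq_zero_iff m t1 y).mp h0)
    · intro j' t' hne'
      apply hmax
      intro h0
      exact hne' ((phi_Am_eq_zero_iff m t' y).mpr h0)
    · by_cases h : j1 = j
      · subst h
        rw [phi_Am_self]
        exact posI_shift rr hinv m _ hpos
      · rw [phi_Am_ne h]
        exact hpos

theorem low_Lm {j : ι} (m : M j) {x : V M} (hx : x ≠ 0) :
    Lm m x ≠ 0 ∧ n0 (Lm m x) = n0 x ∧ low (Lm m x) = Am m (low x) := by
  classical
  have hkey : (Lm m x).filter (fun w => len w = n0 x) = Am m (low x) := by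
    rw [filter_Lm m x (n0 x)]
    have h2 : x.filter (fun w => len w + 1 = n0 x) = 0 := by
      apply filter_eq_zero_of
      intro u hu
      have := n0_le hx u hu
      omega
    rw [h2, map_zero, add_zero]
    rfl
  have hAmne : Am m (low x) ≠ 0 := Am_ne_zero m (low x) (low_ne_zero hx)
  have hLmne : Lm m x ≠ 0 := by
    intro h0
    apply hAmne
    rw [← hkey, h0, Finsupp.filter_zero]
  have hsupp : ∀ u ∈ (Lm m x).support, n0 x ≤ len u := by
    intro u hu
    obtain ⟨w, hw, hl1, hl2⟩ := supp_Lm m x u hu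
    have := n0_le hx w hw
    omega
  have hn0 : n0 (Lm m x) = n0 x := by
    have hge : n0 x ≤ n0 (Lm m x) := by
      obtain ⟨u, hu, hlu⟩ := n0_mem hLmne
      have := hsupp u hu
      omega
    have hle : n0 (Lm m x) ≤ n0 x := by
      obtain ⟨u, hu⟩ := Finsupp.support_nonempty_iff.mpr hAmne
      rw [← hkey] at hu
      obtain ⟨hp, hmem⟩ := mem_support_filter hu
      have := n0_le hLmne u hmem
      omega
    omega
  refine ⟨hLmne, hn0, ?_⟩
  rw [low, hn0, hkey]

theorem pos_Lm (hlin : ∀ i, IsLinearOrder (M i) (rr i))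
    (hinv : ∀ i, ∀ x y z : M i, rr i x y → rr i (z * x) (z * y))
    {j : ι} (m : M j) {x : V M} (hx : Pos rr x) : Pos rr (Lm m x) := by
  obtain ⟨hLmne, hn0, hlow⟩ := low_Lm m hx.1
  refine ⟨hLmne, ?_⟩
  rw [hlow]
  exact poslow_Am rr hinv m hx.2

theorem pos_Lrep (hlin : ∀ i, IsLinearOrder (M i) (rr i))
    (hinv : ∀ i, ∀ x y z : M i, rr i x y → rr i (z * x) (z * y))
    (z : Monoid.CoprodI M) : ∀ x : V M, Pos rr x → Pos rr (Lrep z x) := by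
  induction z using Monoid.CoprodI.induction_on with
  | one =>
    intro x hx
    rw [map_one]
    exact hx
  | of i m =>
    intro x hx
    rw [Lrep_of]
    exact pos_Lm rr hlin hinv m hx
  | mul z1 z2 h1 h2 =>
    intro x hx
    rw [map_mul]
    exact h1 _ (h2 x hx)

end Order2


/-! ### main theorems -/

theorem coprodI_isLeftOrderable {ι : Type*} (M : ι → Type*) [∀ i, Group (M i)]
    (h : ∀ i, IsLeftOrderable (M i)) : IsLeftOrderable (Monoid.CoprodI M) := by
  classical
  choose rr hr using h
  have hlin : ∀ i, IsLinearOrder (M i) (rr i) := fun i => (hr i).1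
  have hinv : ∀ i, ∀ x y z : M i, rr i x y → rr i (z * x) (z * y) := fun i => (hr i).2
  refine ⟨fun g h => g = h ∨ Pos rr (psi h - psi g), ?_, ?_⟩
  · refine { refl := ?_, trans := ?_, antisymm := ?_, total := ?_ }
    · exact fun a => Or.inl rfl
    · rintro a b c (rfl | p1) h2
      · exact h2
      · rcases h2 with rfl | p2
        · exact Or.inr p1
        · right
          have : psi c - psi a = (psi b - psi a) + (psi c - psi b) := by abel
          rw [this]
          exact pos_add rr hlin p1 p2
    · rintro a b (rfl | p1) h2
      · rfl
      · rcases h2 with rfl | p2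
        · rfl
        · exfalso
          have p2' : Pos rr (-(psi b - psi a)) := by rwa [neg_sub]
          exact pos_neg_false rr hlin p1 p2'
    · intro a b
      by_cases hab : a = b
      · exact Or.inl (Or.inl hab)
      · have hne : psi b - psi a ≠ 0 :=
          sub_ne_zero.mpr (fun hc => hab (psi_injective hc.symm))
        rcases pos_total rr hlin hne with hp | hp
        · exact Or.inl (Or.inr hp)
        · right
          right
          rwa [neg_sub] at hp
  · rintro x y z (rfl | p)
    · exact Or.inl rfl
    · right
      have : psi (z * y) - psi (z * x) = Lrep z (psi y - psi x) := by
        rw [psi_mul, psi_mul, map_sub]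
      rw [this]
      exact pos_Lrep rr hlin hinv z _ p

theorem isLeftOrderable_of_injective {G H : Type*} [Group G] [Group H] (f : G →* H)
    (hf : Function.Injective f) (h : IsLeftOrderable H) : IsLeftOrderable G := by
  obtain ⟨r, hlin, hinv⟩ := h
  refine ⟨fun a b => r (f a) (f b), ?_, ?_⟩
  · refine { refl := ?_, trans := ?_, antisymm := ?_, total := ?_ }
    · exact fun a => hlin.refl _
    · exact fun a b c h1 h2 => hlin.trans _ _ _ h1 h2
    · exact fun a b h1 h2 => hf (hlin.antisymm _ _ h1 h2)
    · exact fun a b => hlin.total _ _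
  · intro a b c h1
    rw [map_mul, map_mul]
    exact hinv _ _ _ h1

theorem multiplicative_int_isLeftOrderable : IsLeftOrderable (Multiplicative ℤ) := by
  refine ⟨fun a b => Multiplicative.toAdd a ≤ Multiplicative.toAdd b, ?_, ?_⟩
  · refine { refl := ?_, trans := ?_, antisymm := ?_, total := ?_ }
    · exact fun a => le_refl _
    · exact fun a b c h1 h2 => le_trans h1 h2
    · exact fun a b h1 h2 => Multiplicative.toAdd.injective (le_antisymm h1 h2)
    · exact fun a b => le_total _ _
  · intro a b c h1
    rw [toAdd_mul, toAdd_mul]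
    exact add_le_add_right h1 _

theorem freeGroup_isLeftOrderable (ι : Type*) : IsLeftOrderable (FreeGroup ι) := by
  classical
  set C := Monoid.CoprodI (fun _ : ι => Multiplicative ℤ) with hC
  have hCLO : IsLeftOrderable C :=
    coprodI_isLeftOrderable _ (fun _ => multiplicative_int_isLeftOrderable)
  set α : FreeGroup ι →* C :=
    FreeGroup.lift (fun i => Monoid.CoprodI.of (M := fun _ : ι => Multiplicative ℤ)
      (i := i) (Multiplicative.ofAdd (1 : ℤ))) with hα
  set β : C →* FreeGroup ι :=
    Monoid.CoprodI.lift (fun i => zpowersHom (FreeGroup ι) (FreeGroup.of i)) with hβ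
  have hβα : ∀ x, β (α x) = x := by
    intro x
    have hhom : (β.comp α) = MonoidHom.id (FreeGroup ι) := by
      apply FreeGroup.ext_hom
      intro a
      rw [MonoidHom.comp_apply, MonoidHom.id_apply, hα, FreeGroup.lift_apply_of, hβ,
        Monoid.CoprodI.lift_of, zpowersHom_apply]
      show FreeGroup.of a ^ ((1 : ℤ)) = FreeGroup.of a
      rw [zpow_one]
    calc β (α x) = (β.comp α) x := rfl
    _ = x := by rw [hhom]; rfl
  exact isLeftOrderable_of_injective α (Function.LeftInverse.injective hβα) hCLO

end Vino

/-- **Vinogradov's theorem**: a free product of left-orderable groups is left-orderable;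
in particular every free group is left-orderable. -/
theorem freeProduct_leftOrderable :
    (∀ (ι : Type*) (M : ι → Type*) (_ : ∀ i, Group (M i)),
        (∀ i, IsLeftOrderable (M i)) → IsLeftOrderable (Monoid.CoprodI M)) ∧
    (∀ ι : Type*, IsLeftOrderable (FreeGroup ι)) := by
  constructor
  · intro ι M hG h
    exact Vino.coprodI_isLeftOrderable M h
  · intro ι
    exact Vino.freeGroup_isLeftOrderable ι
end

section
/- Let F be a group with a left-invariant linear order acting freely on a tree T. Then the edge set of T can be partially ordered (linearly on each component, hence linearly, since T is connected) so that the action of F on T preserves this order. -/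
/-- If `F` carries a left-invariant linear order and acts freely on a tree `T`, then
the edge set of `T` admits a linear order preserved by the action of `F`. -/
theorem invariant_order_on_tree_edges
    (F V : Type*) [Group F] [MulAction F V]
    (r : F → F → Prop) (hr : IsLinearOrder F r)
    (hrinv : ∀ x y z : F, r x y → r (z * x) (z * y))
    (T : SimpleGraph V) (hT : T.IsTree)
    (hact : ∀ (f : F) (v w : V), T.Adj v w → T.Adj (f • v) (f • w))
    (hfree : ∀ (f : F) (v : V), f • v = v → f = 1) :
    ∃ s : Sym2 V → Sym2 V → Prop,
      (∀ e ∈ T.edgeSet, s e e) ∧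
      (∀ e ∈ T.edgeSet, ∀ e' ∈ T.edgeSet, s e e' → s e' e → e = e') ∧
      (∀ e ∈ T.edgeSet, ∀ e' ∈ T.edgeSet, ∀ e'' ∈ T.edgeSet,
        s e e' → s e' e'' → s e e'') ∧
      (∀ e ∈ T.edgeSet, ∀ e' ∈ T.edgeSet, s e e' ∨ s e' e) ∧
      (∀ (f : F), ∀ e ∈ T.edgeSet, ∀ e' ∈ T.edgeSet,
        s e e' → s (Sym2.map (f • ·) e) (Sym2.map (f • ·) e')) := by
  classical
  -- left-orderable groups are torsion-free (we only need order 2)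
  have tf : ∀ g : F, g * g = 1 → g = 1 := by
    intro g hg
    rcases hr.total g 1 with h | h
    · have h2 := hrinv _ _ g h
      rw [hg, mul_one] at h2
      exact hr.antisymm _ _ h h2
    · have h2 := hrinv _ _ g h
      rw [hg, mul_one] at h2
      exact hr.antisymm _ _ h2 h
  -- the action on Sym2 V
  set act : F → Sym2 V → Sym2 V := fun f e => Sym2.map (f • ·) e with hact_def
  have act_one : ∀ e, act 1 e = e := by
    intro e
    have : ((1 : F) • ·) = (id : V → V) := by funext x; simp
    simp [hact_def, this]
  have act_mul : ∀ (f g : F) e, act f (act g e) = act (f * g) e := by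
    intro f g e
    simp only [hact_def, Sym2.map_map]
    congr 1
    funext x
    simp [mul_smul]
  have act_edge : ∀ (f : F), ∀ e ∈ T.edgeSet, act f e ∈ T.edgeSet := by
    intro f e he
    induction e using Sym2.inductionOn with
    | hf v w =>
      rw [SimpleGraph.mem_edgeSet] at he
      simpa [hact_def, Sym2.map_pair_eq, SimpleGraph.mem_edgeSet] using hact f v w he
  -- trivial edge stabilizers
  have stab : ∀ e ∈ T.edgeSet, ∀ g : F, act g e = e → g = 1 := by
    intro e he g hg
    induction e using Sym2.inductionOn with
    | hf v w =>
      simp only [hact_def, Sym2.map_pair_eq, Sym2.eq_iff] at hg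
      rcases hg with ⟨h1, _⟩ | ⟨h1, h2⟩
      · exact hfree g v h1
      · have : (g * g) • v = v := by rw [mul_smul, h1, h2]
        exact tf g (hfree _ v this)
  -- the orbit equivalence relation on Sym2 V
  have symm' : ∀ {a b : Sym2 V}, (∃ f : F, act f b = a) → (∃ f : F, act f a = b) := by
    rintro a b ⟨f, rfl⟩
    exact ⟨f⁻¹, by rw [act_mul, inv_mul_cancel, act_one]⟩
  have trans' : ∀ {a b c : Sym2 V}, (∃ f : F, act f b = a) → (∃ f : F, act f c = b) →
      ∃ f : F, act f c = a := by
    rintro a b c ⟨f, rfl⟩ ⟨g, rfl⟩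
    exact ⟨f * g, (act_mul f g c).symm⟩
  let st : Setoid (Sym2 V) :=
    ⟨fun a b => ∃ f : F, act f b = a, fun a => ⟨1, act_one a⟩, symm', trans'⟩
  have st_r : ∀ a b, st.r a b ↔ ∃ f : F, act f b = a := fun a b => Iff.rfl
  set q : Sym2 V → Quotient st := fun e => Quotient.mk st e with hq_def
  set rep : Quotient st → Sym2 V := Quotient.out with hrep_def
  have hrel : ∀ e, ∃ f : F, act f (rep (q e)) = e := by
    intro e
    have h : q (rep (q e)) = q e := Quotient.out_eq (q e)
    have h2 : st.r (rep (q e)) e := Quotient.exact h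
    obtain ⟨f, hf⟩ := (st_r _ _).mp h2
    exact ⟨f⁻¹, by rw [← hf, act_mul, inv_mul_cancel, act_one]⟩
  set fof : Sym2 V → F := fun e => (hrel e).choose with hfof_def
  have fspec : ∀ e, act (fof e) (rep (q e)) = e := fun e => (hrel e).choose_spec
  have rep_edge : ∀ e ∈ T.edgeSet, rep (q e) ∈ T.edgeSet := by
    intro e he
    have h := congrArg (act (fof e)⁻¹) (fspec e)
    rw [act_mul, inv_mul_cancel, act_one] at h
    rw [h]
    exact act_edge _ _ he
  have q_inv : ∀ (f : F) (e : Sym2 V), q (act f e) = q e :=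
    fun f e => Quotient.sound ((st_r (act f e) e).mpr ⟨f, rfl⟩)
  have fof_equiv : ∀ (f : F), ∀ e ∈ T.edgeSet, fof (act f e) = f * fof e := by
    intro f e he
    have h1 : act (fof (act f e)) (rep (q e)) = act f e := by
      have := fspec (act f e); rwa [q_inv] at this
    have h2 : act (f * fof e) (rep (q e)) = act f e := by
      rw [← act_mul, fspec]
    have h3 : act ((f * fof e)⁻¹ * fof (act f e)) (rep (q e)) = rep (q e) := by
      rw [← act_mul, h1, ← h2, act_mul, inv_mul_cancel, act_one]
    have h4 := stab _ (rep_edge e he) _ h3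
    exact (inv_mul_eq_one.mp h4).symm
  -- the linear order
  have wo : IsWellOrder (Quotient st) WellOrderingRel := WellOrderingRel.isWellOrder
  refine ⟨fun e e' => if q e = q e' then r (fof e) (fof e') else WellOrderingRel (q e) (q e'),
    ?_, ?_, ?_, ?_, ?_⟩
  · intro e _
    simp only [if_pos rfl]
    exact hr.refl _
  · intro e he e' he' h1 h2
    by_cases hq : q e = q e'
    · rw [if_pos hq] at h1
      rw [if_pos hq.symm] at h2
      have hf : fof e = fof e' := hr.antisymm _ _ h1 h2
      rw [← fspec e, ← fspec e', hf, hq]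
    · rw [if_neg hq] at h1
      rw [if_neg (Ne.symm hq)] at h2
      exact absurd (trans_of WellOrderingRel h1 h2) (irrefl_of WellOrderingRel _)
  · intro e he e' he' e'' he'' h1 h2
    by_cases hq1 : q e = q e' <;> by_cases hq2 : q e' = q e''
    · rw [if_pos hq1] at h1; rw [if_pos hq2] at h2
      rw [if_pos (hq1.trans hq2)]
      exact hr.trans _ _ _ h1 h2
    · rw [if_neg hq2] at h2
      rw [if_neg (hq1 ▸ hq2), hq1]
      exact h2
    · rw [if_neg hq1] at h1
      rw [if_neg (hq2 ▸ hq1), ← hq2]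
      exact h1
    · rw [if_neg hq1] at h1; rw [if_neg hq2] at h2
      by_cases hq3 : q e = q e''
      · exact absurd (trans_of WellOrderingRel h1 (hq3 ▸ h2)) (irrefl_of WellOrderingRel _)
      · rw [if_neg hq3]
        exact trans_of WellOrderingRel h1 h2
  · intro e he e' he'
    by_cases hq : q e = q e'
    · simp only [if_pos hq, if_pos hq.symm]
      exact hr.total _ _
    · simp only [if_neg hq, if_neg (Ne.symm hq)]
      rcases trichotomous_of WellOrderingRel (q e) (q e') with h | h | h
      · exact Or.inl h
      · exact absurd h hq
      · exact Or.inr h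
  · intro f e he e' he' h
    show ite (q (act f e) = q (act f e')) _ _
    rw [q_inv, q_inv]
    by_cases hq : q e = q e'
    · rw [if_pos hq] at h ⊢
      rw [fof_equiv f e he, fof_equiv f e' he']
      exact hrinv _ _ f h
    · rw [if_neg hq] at h ⊢
      exact h
end
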